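/- arXiv:2006.00353 — 6 statements merged into one kernel-verified Lean document; each statement's English description precedes it below -/
import Mathlib

section
/- If a group G acts regularly on the vertices of a graph Γ (by graph automorphisms), and for a fixed vertex α we set Δ = {g ∈ G : α^g ~ α} ∪ {1}, then for any nontrivial x ∈ G, the number d₁(x) of vertices sent to adjacent vertices by x equals |x^G ∩ Δ| · |C_G(x)|, where x^G is the conjugacy class of x and C_G(x) its centralizer. -/
/-!
Writing vertices as `β = g⁻¹ • α`, invariance of adjacency gives
`x • β ~ β ↔ g x g⁻¹ • α ~ α`, so `d₁(x)` counts the `g` with `g x g⁻¹ ∈ Δ` (never `= 1`, as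
`x ≠ 1`). By orbit–stabilizer for the conjugation action, each element of `x^G` is `g x g⁻¹`
for exactly `|C_G(x)|` elements `g`.
-/

namespace MulAction

theorem card_smul_mem_eq {G X : Type*} [Group G] [MulAction G X] (b : X) (S : Set X) :
    Nat.card {g : G // g • b ∈ S} = (orbit G b ∩ S).ncard * Nat.card (stabilizer G b) := by
  calc Nat.card {g : G // g • b ∈ S}
      = Nat.card {p : orbit G b × stabilizer G b // (p.1 : X) ∈ S} :=
        Nat.card_congr ((orbitProdStabilizerEquivGroup G b).symm.subtypeEquiv fun _ => Iff.rfl)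
    _ = Nat.card ({y : orbit G b // (y : X) ∈ S} × stabilizer G b) :=
        Nat.card_congr
          (Equiv.prodSubtypeFstEquivSubtypeProd (p := fun y : orbit G b => (y : X) ∈ S))
    _ = (orbit G b ∩ S).ncard * Nat.card (stabilizer G b) := by
        rw [Nat.card_prod, Nat.card_congr (Equiv.subtypeSubtypeEquivSubtypeInter _ _),
          ← Nat.card_coe_set_eq]
        rfl

theorem bijective_smul_of_regular {G V : Type*} [Group G] [MulAction G V] {α : V}
    (htrans : ∀ β : V, ∃ g : G, g • α = β) (hfree : ∀ g : G, g • α = α → g = 1) :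
    Function.Bijective (fun g : G => g • α) := by
  refine ⟨fun g h hgh => ?_, htrans⟩
  have : (h⁻¹ * g) • α = α := by
    simp only at hgh
    rw [mul_smul, hgh, inv_smul_smul]
  exact (inv_mul_eq_one.mp (hfree _ this)).symm

end MulAction

open MulAction in
theorem card_conj_mem_eq {G : Type*} [Group G] (x : G) (S : Set G) :
    Nat.card {g : G // g * x * g⁻¹ ∈ S} =
      (conjugatesOf x ∩ S).ncard * Nat.card (Subgroup.centralizer {x}) := by
  have horbit : orbit (ConjAct G) x = conjugatesOf x := by
    ext y
    rw [ConjAct.mem_orbit_conjAct, isConj_comm]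
    rfl
  have hstab : Nat.card (stabilizer (ConjAct G) x) = Nat.card (Subgroup.centralizer {x}) := by
    rw [Subgroup.centralizer_eq_comap_stabilizer]
    exact Nat.card_congr (ConjAct.toConjAct.toEquiv.subtypeEquiv fun _ => Iff.rfl).symm
  rw [← horbit, ← hstab, ← card_smul_mem_eq]
  exact Nat.card_congr (ConjAct.toConjAct.toEquiv.subtypeEquiv fun g => by
    simp [ConjAct.smul_def])

theorem regular_action_d1_general {V G : Type*} [Group G]
    (Γ : SimpleGraph V) [MulAction G V]
    (hpres : ∀ (g : G) (a b : V), Γ.Adj a b ↔ Γ.Adj (g • a) (g • b))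
    (htrans : ∀ a b : V, ∃ g : G, g • a = b)
    (hfree : ∀ (g : G) (a : V), g • a = a → g = 1)
    (α : V) (x : G) (hx : x ≠ 1) :
    Set.ncard {β : V | Γ.Adj (x • β) β} =
      Set.ncard ({y : G | ∃ g : G, g * x * g⁻¹ = y} ∩
          ({g : G | Γ.Adj (g • α) α} ∪ {1})) *
        Nat.card ↥(Subgroup.centralizer ({x} : Set G)) := by
  set Δ : Set G := {g : G | Γ.Adj (g • α) α} ∪ {1}
  have hconj : {y : G | ∃ g : G, g * x * g⁻¹ = y} = conjugatesOf x :=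
    Set.ext fun _ => isConj_iff.symm
  have hΔ (g : G) : g * x * g⁻¹ ∈ Δ ↔ Γ.Adj (x • g⁻¹ • α) (g⁻¹ • α) := by
    rw [hpres g, smul_inv_smul, smul_smul, smul_smul]
    simp [Δ, conj_eq_one_iff, hx]
  let e : G ≃ V := (Equiv.inv G).trans
    (Equiv.ofBijective _ (MulAction.bijective_smul_of_regular (htrans α) (hfree · α)))
  rw [hconj, ← card_conj_mem_eq, ← Nat.card_coe_set_eq]
  exact Nat.card_congr (e.subtypeEquiv hΔ).symm

/-- If a group `G` acts regularly on the vertices of a graph `Γ` by graph automorphisms,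
`α` is a fixed vertex, and `Δ = {g : Γ.Adj (g • α) α} ∪ {1}`, then for any nontrivial
`x ∈ G` the number of vertices sent to adjacent vertices by `x` equals
`|x^G ∩ Δ| ⬝ |C_G(x)|`. -/
theorem regular_action_d1 {V G : Type*} [Fintype V] [Group G] [Fintype G]
    (Γ : SimpleGraph V) [MulAction G V]
    (hpres : ∀ (g : G) (a b : V), Γ.Adj a b ↔ Γ.Adj (g • a) (g • b))
    (htrans : ∀ a b : V, ∃ g : G, g • a = b)
    (hfree : ∀ (g : G) (a : V), g • a = a → g = 1)
    (α : V) (x : G) (hx : x ≠ 1) :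
    Set.ncard {β : V | Γ.Adj (x • β) β} =
      Set.ncard ({y : G | ∃ g : G, g * x * g⁻¹ = y} ∩
          ({g : G | Γ.Adj (g • α) α} ∪ {1})) *
        Nat.card ↥(Subgroup.centralizer ({x} : Set G)) :=
  regular_action_d1_general Γ hpres htrans hfree α x hx
end

section
/- Let Γ be a (v,k,λ,μ)-strongly regular graph whose adjacency matrix has integer eigenvalues k, ν₂, ν₃ with ν₂ > ν₃, and suppose a group G acts regularly on the vertices of Γ. Fix a vertex α and let Δ = {g ∈ G : α^g ~ α} ∪ {1}. Then for every nontrivial x ∈ G there is an integer u_x such that |x^G ∩ Δ|·|C_G(x)| = k − ν₃ + u_x(ν₂ − ν₃). -/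
/-!
With `A` the adjacency matrix and `J` the all-ones matrix, `C = v (A - ν₃ I) - (k - ν₃) J` is
`v (ν₂ - ν₃)` times the projection onto the `ν₂`-eigenspace, so `C² = v (ν₂ - ν₃) C`. If `P` is the
permutation matrix of an automorphism `σ` of order `r`, then `C` and `P` commute and
`(C P)^(r+1) = (v (ν₂ - ν₃))^r C P`: the eigenvalues of `C P / (v (ν₂ - ν₃))` are `0` or roots of
unity, so its trace is a rational algebraic integer. Reading off the diagonal of `C P` gives the
De Winter–Kamischke–Wang congruence `k - ν₃ ≡ d₁(σ) - ν₃ d₀(σ) (mod ν₂ - ν₃)`.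

For `σ = x` acting regularly, `d₀ = 0`, and the bijection `g ↦ g⁻¹ α` turns the vertices `a` with
`a ~ x a` into the `g` with `g x g⁻¹ ∈ Δ`; each conjugate of `x` arises from exactly `|C_G(x)|`
such `g`, so `d₁ = |x^G ∩ Δ| |C_G(x)|`.
-/

open Finset Matrix

theorem pow_succ_eq_smul_of_mul_self_eq_smul {R A : Type*} [CommSemiring R] [Semiring A]
    [Algebra R A] {a : A} {c : R} (h : a * a = c • a) (j : ℕ) : a ^ (j + 1) = c ^ j • a := by
  induction j with
  | zero => simp
  | succ j ih => rw [pow_succ, ih, smul_mul_assoc, h, smul_smul, ← pow_succ]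

theorem Commute.mul_pow_succ_eq_smul {R A : Type*} [CommSemiring R] [Semiring A] [Algebra R A]
    {a b : A} {c : R} (h : a * a = c • a) (hab : Commute a b) {r : ℕ} (hb : b ^ r = 1) :
    (a * b) ^ (r + 1) = c ^ r • (a * b) := by
  rw [hab.mul_pow, pow_succ_eq_smul_of_mul_self_eq_smul h, pow_succ, hb, one_mul, smul_mul_assoc]

namespace Matrix

theorem ones_mul_ones {n R : Type*} [Fintype n] [NonAssocSemiring R] :
    (of fun _ _ => 1 : Matrix n n R) * of (fun _ _ => 1) = Fintype.card n • of fun _ _ => 1 := by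
  ext
  simp [mul_apply]

variable {n : Type*} [Fintype n] [DecidableEq n]

theorem commute_permMatrix_inv {R : Type*} [NonAssocSemiring R] {M : Matrix n n R}
    {σ : Equiv.Perm n} (hM : ∀ a b, M (σ a) (σ b) = M a b) : Commute M (σ⁻¹.permMatrix R) := by
  rw [Commute, SemiconjBy, PEquiv.mul_toMatrix_toPEquiv, PEquiv.toMatrix_toPEquiv_mul]
  ext a b
  simpa [Equiv.Perm.inv_def] using hM (σ⁻¹ a) b

theorem trace_mul_permMatrix_inv {R : Type*} [NonAssocSemiring R] (M : Matrix n n R)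
    (σ : Equiv.Perm n) :
    (M * σ⁻¹.permMatrix R).trace = ∑ a, M a (σ a) := by
  simp [trace, PEquiv.mul_toMatrix_toPEquiv, Equiv.Perm.inv_def]

theorem permMatrix_inv_pow_orderOf {R : Type*} [Semiring R] (σ : Equiv.Perm n) :
    σ⁻¹.permMatrix R ^ orderOf σ = 1 := by
  rw [← permMatrixHom_apply, ← map_pow, pow_orderOf_eq_one, map_one]

open Polynomial in
theorem isIntegral_trace_of_pow_succ_eq_self {K : Type*} [Field K] [IsAlgClosed K]
    {M : Matrix n n K} {r : ℕ} (hr : 0 < r) (hM : M ^ (r + 1) = M) :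
    IsIntegral ℤ M.trace := by
  rw [trace_eq_sum_roots_charpoly]
  refine IsIntegral.multiset_sum fun t ht =>
    ⟨X ^ (r + 1) - X, monic_X_pow_sub (by rw [degree_X]; exact_mod_cast Nat.succ_lt_succ hr), ?_⟩
  have hspec : t ∈ spectrum K M :=
    mem_spectrum_iff_isRoot_charpoly.mpr (isRoot_of_mem_roots ht)
  have : Nontrivial (Matrix n n K) := by
    by_contra h
    rw [not_nontrivial_iff_subsingleton] at h
    simp [spectrum.of_subsingleton] at hspec
  have hzero : aeval M (X ^ (r + 1) - X : K[X]) = 0 := by simp [hM]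
  have := spectrum.subset_polynomial_aeval M (X ^ (r + 1) - X) ⟨t, hspec, rfl⟩
  rw [hzero, spectrum.zero_eq] at this
  simpa [eval₂_sub] using this

theorem dvd_trace_of_pow_succ_eq_smul {N : Matrix n n ℤ} {c : ℤ} (hc : c ≠ 0) {r : ℕ}
    (hr : 0 < r) (hN : N ^ (r + 1) = c ^ r • N) : c ∣ N.trace := by
  set M : Matrix n n ℂ := (c : ℂ)⁻¹ • N.map (Int.castRingHom ℂ) with hMdef
  have hcC : (c : ℂ) ≠ 0 := Int.cast_ne_zero.mpr hc
  have hM : M ^ (r + 1) = M := by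
    rw [hMdef, _root_.smul_pow, ← RingHom.mapMatrix_apply, ← map_pow, hN, map_zsmul,
      RingHom.mapMatrix_apply, ← Int.cast_smul_eq_zsmul ℂ, smul_smul]
    congr 1
    push_cast
    rw [inv_pow, pow_succ', mul_inv, mul_assoc, inv_mul_cancel₀ (pow_ne_zero r hcC), mul_one]
  have htrace : M.trace = algebraMap ℚ ℂ (N.trace / c) := by
    simp [hMdef, div_eq_inv_mul, trace, Finset.mul_sum]
  have hint : IsIntegral ℤ ((N.trace : ℚ) / c) := by
    refine (isIntegral_algHom_iff (IsScalarTower.toAlgHom ℤ ℚ ℂ) (algebraMap ℚ ℂ).injective).mp ?_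
    simpa [htrace] using isIntegral_trace_of_pow_succ_eq_self hr hM
  obtain ⟨q, hq⟩ := IsIntegrallyClosed.isIntegral_iff.mp hint
  refine ⟨q, ?_⟩
  rw [eq_div_iff (by exact_mod_cast hc)] at hq
  simp only [algebraMap_int_eq, eq_intCast] at hq
  exact_mod_cast hq.symm.trans (mul_comm _ _)

end Matrix

theorem vieta_of_eq_quadratic_roots {b e x y : ℝ} (hx : x = (b + √(b ^ 2 + 4 * e)) / 2)
    (hy : y = (b - √(b ^ 2 + 4 * e)) / 2) (hxy : y < x) : x + y = b ∧ x * y = -e := by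
  have hpos : 0 < √(b ^ 2 + 4 * e) := by linarith
  have hsq := Real.sq_sqrt (Real.sqrt_pos.mp hpos).le
  constructor
  · rw [hx, hy]; ring
  · rw [hx, hy]; linear_combination (-1 / 4 : ℝ) * hsq

namespace SimpleGraph

variable {V : Type*} {Γ : SimpleGraph V} [DecidableRel Γ.Adj] {n k ℓ μ : ℕ}

section

variable [DecidableEq V]

theorem adjMatrix_compl {R : Type*} [AddGroupWithOne R] :
    Γᶜ.adjMatrix R = of (fun _ _ => 1) - 1 - Γ.adjMatrix R := by
  ext a b
  by_cases hab : a = b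
  · subst hab; simp
  · by_cases hadj : Γ.Adj a b <;> simp [hadj, hab, one_apply_ne hab]

variable (Γ) in
def scaledEigenprojection (n k : ℕ) (ν₃ : ℤ) : Matrix V V ℤ :=
  (n : ℤ) • Γ.adjMatrix ℤ - ((n : ℤ) * ν₃) • 1 - ((k : ℤ) - ν₃) • of fun _ _ => 1

theorem scaledEigenprojection_apply (ν₃ : ℤ) (a b : V) :
    Γ.scaledEigenprojection n k ν₃ a b =
      n * (if Γ.Adj a b then 1 else 0) - n * ν₃ * (if a = b then 1 else 0) - (k - ν₃) := by
  simp only [scaledEigenprojection, Matrix.sub_apply, Matrix.smul_apply, one_apply, of_apply,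
    adjMatrix_apply, smul_eq_mul]
  ring

end

variable [Fintype V]

theorem IsRegularOfDegree.adjMatrix_mul_ones {R : Type*} [NonAssocSemiring R]
    (h : Γ.IsRegularOfDegree k) : Γ.adjMatrix R * of (fun _ _ => 1) = k • of (fun _ _ => 1) := by
  ext a b
  simp [adjMatrix_mul_apply, h a]

theorem IsRegularOfDegree.ones_mul_adjMatrix {R : Type*} [NonAssocSemiring R]
    (h : Γ.IsRegularOfDegree k) : of (fun _ _ => 1) * Γ.adjMatrix R = k • of (fun _ _ => 1) := by
  ext a b
  simp [mul_adjMatrix_apply, h b]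

variable [DecidableEq V]

theorem IsSRGWith.adjMatrix_sq {R : Type*} [Ring R] (h : Γ.IsSRGWith n k ℓ μ) :
    Γ.adjMatrix R ^ 2 =
      ((k : R) - μ) • 1 + ((ℓ : R) - μ) • Γ.adjMatrix R + (μ : R) • of (fun _ _ => 1) := by
  rw [h.matrix_eq, adjMatrix_compl]
  match_scalars <;> simp [sub_eq_add_neg]

theorem IsSRGWith.param_eq_int [Nonempty V] (h : Γ.IsSRGWith n k ℓ μ) :
    (k : ℤ) * k = (k - μ) + (ℓ - μ) * k + μ * n := by
  obtain ⟨a⟩ := ‹Nonempty V›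
  have hA := h.regular.adjMatrix_mul_ones (R := ℤ)
  have key := congrArg (· * (of (fun _ _ => 1) : Matrix V V ℤ)) (h.adjMatrix_sq (R := ℤ))
  simp only [sq, Matrix.mul_assoc, hA, Matrix.mul_smul, add_mul, Matrix.smul_mul, Matrix.one_mul,
    ones_mul_ones, h.card, smul_smul] at key
  have := congrFun (congrFun key a) a
  simp only [Matrix.smul_apply, of_apply, Nat.cast_mul, mul_one, smul_of,
    zsmul_eq_mul, Int.cast_sub, Int.cast_natCast, nsmul_eq_mul, of_add_of, Matrix.add_apply,
    Pi.add_apply, Pi.mul_apply, Pi.sub_apply, Pi.natCast_apply] at this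
  linear_combination this

theorem IsSRGWith.scaledEigenprojection_mul_self [Nonempty V] (h : Γ.IsSRGWith n k ℓ μ)
    {ν₂ ν₃ : ℤ} (hsum : ν₂ + ν₃ = ℓ - μ) (hprod : ν₂ * ν₃ = μ - k) :
    Γ.scaledEigenprojection n k ν₃ * Γ.scaledEigenprojection n k ν₃ =
      ((ν₂ - ν₃) * n) • Γ.scaledEigenprojection n k ν₃ := by
  have hsq := h.adjMatrix_sq (R := ℤ)
  rw [sq] at hsq
  have hparam := h.param_eq_int
  simp only [scaledEigenprojection, sub_mul, mul_sub, Matrix.smul_mul, Matrix.mul_smul,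
    Matrix.one_mul, Matrix.mul_one, hsq, h.regular.adjMatrix_mul_ones,
    h.regular.ones_mul_adjMatrix, ones_mul_ones, h.card]
  match_scalars
  · linear_combination (n : ℤ) ^ 2 * hprod
  · linear_combination -(n : ℤ) ^ 2 * hsum
  · linear_combination (n : ℤ) * (k * hsum - hparam - hprod)

theorem IsSRGWith.sub_dvd_card_adj_sub [Nonempty V] (h : Γ.IsSRGWith n k ℓ μ) {ν₂ ν₃ : ℤ}
    (hsum : ν₂ + ν₃ = ℓ - μ) (hprod : ν₂ * ν₃ = μ - k) (hne : ν₂ ≠ ν₃) (σ : Equiv.Perm V)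
    (hσ : ∀ a b, Γ.Adj (σ a) (σ b) ↔ Γ.Adj a b) :
    ν₂ - ν₃ ∣ (#{a | Γ.Adj a (σ a)} : ℤ) - ν₃ * #{a | σ a = a} - (k - ν₃) := by
  set C := Γ.scaledEigenprojection n k ν₃
  have hC := h.scaledEigenprojection_mul_self hsum hprod
  have hCσ : Commute C (σ⁻¹.permMatrix ℤ) := by
    refine commute_permMatrix_inv fun a b => ?_
    simp only [C, scaledEigenprojection_apply, hσ, σ.injective.eq_iff]
  have hn : (n : ℤ) ≠ 0 := by
    rw [← h.card]
    exact_mod_cast Fintype.card_ne_zero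
  have hdvd := dvd_trace_of_pow_succ_eq_smul (mul_ne_zero (sub_ne_zero.mpr hne) hn)
    (orderOf_pos σ) (hCσ.mul_pow_succ_eq_smul hC (permMatrix_inv_pow_orderOf σ))
  have htrace : (C * σ⁻¹.permMatrix ℤ).trace =
      n * ((#{a | Γ.Adj a (σ a)} : ℤ) - ν₃ * #{a | σ a = a} - (k - ν₃)) := by
    simp only [trace_mul_permMatrix_inv, C, scaledEigenprojection_apply, sum_sub_distrib,
      ← mul_sum, sum_boole, sum_const, card_univ, h.card]
    simp only [Int.nsmul_eq_mul, eq_comm]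
    ring
  rw [htrace, mul_comm _ (n : ℤ)] at hdvd
  exact (mul_dvd_mul_iff_left hn).mp hdvd

end SimpleGraph

section Conjugation

variable {G : Type*} [Group G] [Fintype G] [DecidableEq G]

theorem card_filter_conj_eq_card_centralizer (x g₀ : G) :
    #{g | g * x * g⁻¹ = g₀ * x * g₀⁻¹} = Nat.card (Subgroup.centralizer {x}) := by
  rw [← Fintype.card_subtype, ← Nat.card_eq_fintype_card]
  refine Nat.card_congr ((Equiv.mulLeft g₀⁻¹).subtypeEquiv fun g => ?_)
  rw [Equiv.coe_mulLeft, Subgroup.mem_centralizer_singleton_iff]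
  dsimp only
  constructor
  · intro h
    calc g₀⁻¹ * g * x = g₀⁻¹ * (g * x * g⁻¹) * g := by group
      _ = x * (g₀⁻¹ * g) := by rw [h]; group
  · intro h
    calc g * x * g⁻¹ = g₀ * (g₀⁻¹ * g * x) * g⁻¹ := by group
      _ = g₀ * x * g₀⁻¹ := by rw [h]; group

theorem card_filter_conj_eq_ncard_mul_card_centralizer (x : G) (p : G → Prop) [DecidablePred p] :
    #{g | p (g * x * g⁻¹)} =
      ({y | ∃ g, g * x * g⁻¹ = y} ∩ {y | p y}).ncard * Nat.card (Subgroup.centralizer {x}) := by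
  have hset : {y | ∃ g, g * x * g⁻¹ = y} ∩ {y | p y} =
      ↑({y | (∃ g, g * x * g⁻¹ = y) ∧ p y} : Finset G) := by
    ext; simp
  rw [hset, Set.ncard_coe_finset, card_eq_sum_card_fiberwise (f := fun g => g * x * g⁻¹)
    (t := {y | (∃ g, g * x * g⁻¹ = y) ∧ p y}) (fun g hg => by simpa using hg)]
  refine sum_const_nat fun y hy => ?_
  obtain ⟨⟨g₀, rfl⟩, hp⟩ := by simpa using hy
  rw [filter_filter, ← card_filter_conj_eq_card_centralizer x g₀]
  congr 1
  ext g
  simp only [mem_filter, mem_univ, true_and, and_iff_right_iff_imp]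
  exact fun h => h ▸ hp

end Conjugation

theorem card_filter_adj_smul_eq_card_filter_conj {V G : Type*} [Fintype V] [Group G] [Fintype G]
    [MulAction G V] (Γ : SimpleGraph V) [DecidableRel Γ.Adj]
    (hpres : ∀ (g : G) (a b : V), Γ.Adj a b ↔ Γ.Adj (g • a) (g • b))
    (htrans : ∀ a b : V, ∃ g : G, g • a = b) (hfree : ∀ (g : G) (a : V), g • a = a → g = 1)
    (α : V) (x : G) :
    #{a | Γ.Adj a (x • a)} = #{g : G | Γ.Adj ((g * x * g⁻¹) • α) α} := by
  have hconj (g : G) : Γ.Adj ((g * x * g⁻¹) • α) α ↔ Γ.Adj (g⁻¹ • α) (x • g⁻¹ • α) := by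
    rw [hpres g⁻¹, Γ.adj_comm, smul_smul, smul_smul, show g⁻¹ * (g * x * g⁻¹) = x * g⁻¹ by group]
  symm
  refine card_nbij (fun g => g⁻¹ • α) (fun g hg => ?_) (fun g₁ _ g₂ _ h => ?_) (fun a ha => ?_)
  · simpa [hconj] using hg
  · have : (g₂ * g₁⁻¹) • α = α := by
      dsimp only at h
      rw [mul_smul, h, smul_inv_smul]
    exact (mul_inv_eq_one.mp (hfree _ _ this)).symm
  · obtain ⟨g, rfl⟩ := htrans α a
    refine ⟨g⁻¹, ?_, by simp⟩
    simpa [hconj] using ha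

/-- Let `Γ` be a `(v,k,λ,μ)`-strongly regular graph with integer eigenvalues
`k, ν₂ > ν₃`, and let `G` act regularly on the vertices of `Γ`.  Fix a vertex `α`
and let `Δ = {g : Γ.Adj (g • α) α} ∪ {1}`.  Then for every nontrivial `x ∈ G` there
is an integer `u` with `|x^G ∩ Δ|⬝|C_G(x)| = k - ν₃ + u(ν₂ - ν₃)`. -/
theorem regular_action_congruence {V G : Type*} [Fintype V] [Group G] [Fintype G]
    (Γ : SimpleGraph V) [DecidableRel Γ.Adj] [MulAction G V]
    (v k l m : ℕ) (ν₂ ν₃ : ℤ)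
    (h : Γ.IsSRGWith v k l m)
    (hν₂ : (ν₂ : ℝ) = ((l : ℝ) - m + Real.sqrt (((l : ℝ) - m) ^ 2 + 4 * ((k : ℝ) - m))) / 2)
    (hν₃ : (ν₃ : ℝ) = ((l : ℝ) - m - Real.sqrt (((l : ℝ) - m) ^ 2 + 4 * ((k : ℝ) - m))) / 2)
    (h23 : ν₂ > ν₃)
    (hpres : ∀ (g : G) (a b : V), Γ.Adj a b ↔ Γ.Adj (g • a) (g • b))
    (htrans : ∀ a b : V, ∃ g : G, g • a = b)
    (hfree : ∀ (g : G) (a : V), g • a = a → g = 1)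
    (α : V) (x : G) (hx : x ≠ 1) :
    ∃ u : ℤ,
      (Set.ncard ({y : G | ∃ g : G, g * x * g⁻¹ = y} ∩
          ({g : G | Γ.Adj (g • α) α} ∪ {1})) *
        Nat.card ↥(Subgroup.centralizer ({x} : Set G)) : ℤ)
        = (k : ℤ) - ν₃ + u * (ν₂ - ν₃) := by
  classical
  have : Nonempty V := ⟨α⟩
  obtain ⟨hsum, hprod⟩ := vieta_of_eq_quadratic_roots hν₂ hν₃ (by exact_mod_cast h23)
  obtain ⟨u, hu⟩ := h.sub_dvd_card_adj_sub (by exact_mod_cast hsum)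
    (by exact_mod_cast hprod.trans (neg_sub _ _)) h23.ne' (MulAction.toPerm x)
    fun a b => (hpres x a b).symm
  have hfix : #{a | MulAction.toPerm x a = a} = 0 :=
    card_eq_zero.mpr (filter_eq_empty_iff.mpr fun a _ ha => hx (hfree x a ha))
  have hΔ : {y | ∃ g : G, g * x * g⁻¹ = y} ∩ ({g : G | Γ.Adj (g • α) α} ∪ {1}) =
      {y | ∃ g : G, g * x * g⁻¹ = y} ∩ {y | Γ.Adj (y • α) α} := by
    ext y
    simp only [Set.mem_inter_iff, Set.mem_ofPred_eq, Set.mem_union, Set.mem_singleton_iff]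
    refine and_congr_right fun ⟨g, hg⟩ => or_iff_left fun hy => hx ?_
    rwa [← hg, conj_eq_one_iff] at hy
  have hcount : #{a | Γ.Adj a (MulAction.toPerm x a)} = ({y | ∃ g : G, g * x * g⁻¹ = y} ∩
      ({g : G | Γ.Adj (g • α) α} ∪ {1})).ncard * Nat.card (Subgroup.centralizer {x}) := by
    rw [hΔ, ← card_filter_conj_eq_ncard_mul_card_centralizer,
      ← card_filter_adj_smul_eq_card_filter_conj Γ hpres htrans hfree]
    rfl
  rw [hfix, Nat.cast_zero, mul_zero, sub_zero] at hu
  refine ⟨u, ?_⟩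
  rw [← Nat.cast_mul, ← hcount]
  linear_combination hu
end

section
/- Let Γ be a (v,k,λ,μ)-strongly regular graph with integer eigenvalues k, ν₂ > ν₃ and μ > 0, and let G act regularly on the vertices of Γ. Fix a vertex α, let Δ = {g ∈ G : α^g ~ α} ∪ {1} and Δᶜ = G \ Δ. Then for every nontrivial x ∈ G there is an integer u_x with |x^G ∩ Δᶜ|·|C_G(x)| = ν₂ν₃(ν₂+1)(ν₃+1)/μ − ν₂(ν₃+1) − u_x(ν₂ − ν₃). -/
/-!
Let `A`, `J`, `P` be the adjacency matrix, the all-ones matrix and the permutation matrix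
of `x`. Because `(A - ν₂)(A - ν₃) = μ J`, the matrix
`E = (A - ν₃ - ((k - ν₃)/v) J)/(ν₂ - ν₃)` is an idempotent commuting with `P`, so
`(PE)^(r+1) = PE` for `r` the order of `x`: the eigenvalues of `PE` are roots of unity or
zero, and its rational trace is an integer `u`. As `x` has no fixed points,
`tr(PE) = (d - (k - ν₃))/(ν₂ - ν₃)`, where `d` counts the vertices `a` adjacent to `x • a`.
Since the action is regular, `d = |x^G ∩ Δ|·|C_G(x)|` and `|x^G ∩ Δᶜ|·|C_G(x)| = v - d`;
the identities `k = μ - ν₂ν₃` and `μv = (k - ν₂)(k - ν₃)` put `v - d` into the stated form.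
-/

open Polynomial Matrix Finset MulAction

lemma isIntegral_of_mem_spectrum_of_pow_eq_self {K A : Type*} [Field K] [Ring A] [Algebra K A]
    {a : A} {s : ℕ} (hs : 2 ≤ s) (ha : a ^ s = a) {z : K} (hz : z ∈ spectrum K a) :
    IsIntegral ℤ z := by
  have hmem := spectrum.subset_polynomial_aeval a (X ^ s - X) ⟨z, hz, rfl⟩
  have hroot : z ^ s - z = 0 := by
    by_contra hne
    simp only [map_sub, map_pow, aeval_X, ha, sub_self, eval_sub, eval_pow, eval_X] at hmem
    exact spectrum.notMem_iff.mpr (by simpa using (IsUnit.mk0 _ hne).map (algebraMap K A)) hmem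
  exact ⟨X ^ s - X, monic_X_pow_sub (by rw [degree_X]; exact_mod_cast hs), by simpa using hroot⟩

lemma Matrix.exists_trace_eq_intCast_of_pow_eq_self {n : Type*} [Fintype n] [DecidableEq n]
    {M : Matrix n n ℚ} {s : ℕ} (hs : 2 ≤ s) (hM : M ^ s = M) : ∃ t : ℤ, M.trace = t := by
  let f : ℚ →+* ℂ := algebraMap ℚ ℂ
  have hN : (M.map f) ^ s = M.map f := by rw [← Matrix.map_pow, hM]
  have hint : IsIntegral ℤ (f M.trace) := by
    rw [AddMonoidHom.map_trace f, Matrix.trace_eq_sum_roots_charpoly]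
    exact IsIntegral.multiset_sum fun z hz => isIntegral_of_mem_spectrum_of_pow_eq_self hs hN
      (Matrix.mem_spectrum_iff_isRoot_charpoly.mpr (isRoot_of_mem_roots hz))
  obtain ⟨t, ht⟩ := IsIntegrallyClosed.isIntegral_iff.mp
    ((isIntegral_algHom_iff f.toIntAlgHom f.injective).mp hint)
  exact ⟨t, ht.symm⟩

section SRGIdempotent

variable {K R : Type*} [Field K] [Ring R] [Algebra K R]

/-- When `(A - ν₂)(A - ν₃) = μ J`, this is the projection onto the `ν₂`-eigenspace of `A`
complementary to the `k`-eigenvector `J`. -/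
def srgIdempotent (A J : R) (k v ν₂ ν₃ : K) : R :=
  (ν₂ - ν₃)⁻¹ • (A - ν₃ • 1 - ((k - ν₃) / v) • J)

variable {A J : R} {k v μ ν₂ ν₃ : K}

lemma mul_eq_of_mul_sub_smul_one_eq_smul (hAJ : A * J = k • J) (hJJ : J * J = v • J)
    (hA : (A - ν₂ • 1) * (A - ν₃ • 1) = μ • J) (hJ : J ≠ 0) :
    μ * v = (k - ν₂) * (k - ν₃) := by
  have h := congrArg (· * J) hA
  simp only [sub_mul, mul_sub, mul_assoc, hAJ, smul_mul_assoc, mul_smul_comm, one_mul, hJJ,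
    smul_smul] at h
  have h' : ((k - ν₂) * (k - ν₃) - μ * v) • J = 0 := by
    linear_combination (norm := module) h
  exact (sub_eq_zero.mp ((smul_eq_zero.mp h').resolve_right hJ)).symm

lemma isIdempotentElem_srgIdempotent (hAJ : A * J = k • J) (hJA : J * A = k • J)
    (hJJ : J * J = v • J) (hA : (A - ν₂ • 1) * (A - ν₃ • 1) = μ • J)
    (hμ : μ * v = (k - ν₂) * (k - ν₃)) (hv : v ≠ 0) (hν : ν₂ ≠ ν₃) :
    IsIdempotentElem (srgIdempotent A J k v ν₂ ν₃) := by
  have hAA : A * A = (ν₂ + ν₃) • A - (ν₂ * ν₃) • 1 + μ • J := by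
    rw [← hA]
    simp only [sub_mul, mul_sub, smul_mul_assoc, mul_smul_comm, one_mul, mul_one]
    module
  obtain rfl : μ = (k - ν₂) * (k - ν₃) / v := eq_div_of_mul_eq hv hμ
  have hν' : ν₂ - ν₃ ≠ 0 := sub_ne_zero.mpr hν
  unfold IsIdempotentElem srgIdempotent
  simp only [sub_mul, mul_sub, smul_mul_assoc, mul_smul_comm, one_mul, mul_one, hAA, hAJ, hJA,
    hJJ]
  match_scalars <;> field_simp <;> ring

lemma Commute.srgIdempotent_right {P : R} (hA : Commute P A) (hJ : Commute P J) :
    Commute P (srgIdempotent A J k v ν₂ ν₃) :=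
  (((hA.sub_right ((Commute.one_right P).smul_right ν₃)).sub_right
    (hJ.smul_right _))).smul_right _

end SRGIdempotent

lemma SimpleGraph.adjMatrix_compl_s7 {V R : Type*} [DecidableEq V] [Ring R] (Γ : SimpleGraph V)
    [DecidableRel Γ.Adj] :
    Γᶜ.adjMatrix R = of 1 - 1 - Γ.adjMatrix R := by
  ext a b
  by_cases hab : a = b
  · simp [hab]
  · by_cases hadj : Γ.Adj a b <;> simp [hab, hadj, one_apply]

section AdjMatrix

variable {V R : Type*} [Fintype V] {Γ : SimpleGraph V} [DecidableRel Γ.Adj]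

lemma Matrix.of_one_mul_of_one [NonAssocSemiring R] :
    (of 1 : Matrix V V R) * of 1 = (Fintype.card V : R) • of 1 := by
  ext; simp [Matrix.mul_apply]

lemma SimpleGraph.IsRegularOfDegree.adjMatrix_mul_of_one [NonAssocSemiring R] {k : ℕ}
    (h : Γ.IsRegularOfDegree k) : Γ.adjMatrix R * of 1 = (k : R) • of 1 := by
  ext a b; simp [SimpleGraph.adjMatrix_mul_apply, h a]

lemma SimpleGraph.IsRegularOfDegree.of_one_mul_adjMatrix [NonAssocSemiring R] {k : ℕ}
    (h : Γ.IsRegularOfDegree k) : of 1 * Γ.adjMatrix R = (k : R) • of 1 := by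
  ext a b; simp [SimpleGraph.mul_adjMatrix_apply, h b]

lemma SimpleGraph.IsSRGWith.adjMatrix_sub_smul_one_mul_adjMatrix_sub_smul_one [DecidableEq V]
    [CommRing R] {v k l m : ℕ} (h : Γ.IsSRGWith v k l m) {ν₂ ν₃ : R} (hsum : ν₂ + ν₃ = l - m)
    (hprod : ν₂ * ν₃ = m - k) :
    (Γ.adjMatrix R - ν₂ • 1) * (Γ.adjMatrix R - ν₃ • 1) = (m : R) • of 1 := by
  have hsq := h.matrix_eq (α := R)
  rw [sq, SimpleGraph.adjMatrix_compl_s7] at hsq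
  simp only [sub_mul, mul_sub, smul_mul_assoc, mul_smul_comm, one_mul, mul_one, hsq]
  linear_combination (norm := module) -(hsum • Γ.adjMatrix R) + hprod • (1 : Matrix V V R)

theorem SimpleGraph.IsSRGWith.mul_card_eq [DecidableEq V] [Nonempty V] [Field R] {v k l m : ℕ}
    (h : Γ.IsSRGWith v k l m) {ν₂ ν₃ : R} (hsum : ν₂ + ν₃ = l - m) (hprod : ν₂ * ν₃ = m - k) :
    (m : R) * v = (k - ν₂) * (k - ν₃) := by
  refine mul_eq_of_mul_sub_smul_one_eq_smul h.regular.adjMatrix_mul_of_one ?_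
    (h.adjMatrix_sub_smul_one_mul_adjMatrix_sub_smul_one hsum hprod) fun hJ => ?_
  · rw [of_one_mul_of_one, h.card]
  · exact one_ne_zero (congrFun₂ hJ (Classical.arbitrary V) (Classical.arbitrary V))

theorem SimpleGraph.IsSRGWith.isIdempotentElem_srgIdempotent [DecidableEq V] [Nonempty V]
    [Field R] [CharZero R] {v k l m : ℕ} (h : Γ.IsSRGWith v k l m) {ν₂ ν₃ : R}
    (hsum : ν₂ + ν₃ = l - m) (hprod : ν₂ * ν₃ = m - k) (hν : ν₂ ≠ ν₃) :
    IsIdempotentElem (srgIdempotent (Γ.adjMatrix R) (of 1) (k : R) v ν₂ ν₃) :=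
  _root_.isIdempotentElem_srgIdempotent h.regular.adjMatrix_mul_of_one
    h.regular.of_one_mul_adjMatrix (by rw [of_one_mul_of_one, h.card])
    (h.adjMatrix_sub_smul_one_mul_adjMatrix_sub_smul_one hsum hprod) (h.mul_card_eq hsum hprod)
    (by rw [← h.card]; exact_mod_cast Fintype.card_ne_zero) hν

end AdjMatrix

section Automorphism

variable {V R : Type*} [Fintype V] [DecidableEq V] {Γ : SimpleGraph V} [DecidableRel Γ.Adj]

lemma SimpleGraph.commute_permMatrix_adjMatrix [NonAssocSemiring R] {σ : Equiv.Perm V}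
    (hσ : ∀ a b, Γ.Adj (σ a) (σ b) ↔ Γ.Adj a b) :
    Commute (σ.permMatrix R) (Γ.adjMatrix R) := by
  rw [Commute, SemiconjBy, PEquiv.toMatrix_toPEquiv_mul, PEquiv.mul_toMatrix_toPEquiv]
  ext a b
  simp [SimpleGraph.adjMatrix_apply, ← hσ a (σ.symm b)]

lemma Matrix.commute_permMatrix_of_one [NonAssocSemiring R] (σ : Equiv.Perm V) :
    Commute (σ.permMatrix R) (of 1) := by
  rw [Commute, SemiconjBy, PEquiv.toMatrix_toPEquiv_mul, PEquiv.mul_toMatrix_toPEquiv]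
  rfl

lemma SimpleGraph.trace_permMatrix_mul_adjMatrix [NonAssocSemiring R] (σ : Equiv.Perm V) :
    (σ.permMatrix R * Γ.adjMatrix R).trace = #{a | Γ.Adj (σ a) a} := by
  rw [PEquiv.toMatrix_toPEquiv_mul]
  simp [Matrix.trace, SimpleGraph.adjMatrix_apply, Finset.sum_boole]

lemma Matrix.permMatrix_pow [Semiring R] (σ : Equiv.Perm V) (n : ℕ) :
    (σ ^ n).permMatrix R = σ.permMatrix R ^ n := by
  induction n with
  | zero => simp
  | succ n ih => rw [pow_succ, permMatrix_mul, ih, pow_succ']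

lemma SimpleGraph.trace_permMatrix_mul_srgIdempotent [Nonempty V] [Field R] [CharZero R]
    (σ : Equiv.Perm V) {k ν₂ ν₃ : R} (hν : ν₂ ≠ ν₃) :
    (ν₂ - ν₃) * (σ.permMatrix R *
        srgIdempotent (Γ.adjMatrix R) (of 1) k (Fintype.card V) ν₂ ν₃).trace =
      #{a | Γ.Adj (σ a) a} - ν₃ * (Function.fixedPoints σ).ncard - (k - ν₃) := by
  have hν' : ν₂ - ν₃ ≠ 0 := sub_ne_zero.mpr hν
  have hv : (Fintype.card V : R) ≠ 0 := by exact_mod_cast Fintype.card_ne_zero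
  have hPJ : σ.permMatrix R * of 1 = of 1 := by rw [PEquiv.toMatrix_toPEquiv_mul]; rfl
  have htrJ : (of 1 : Matrix V V R).trace = Fintype.card V := by simp [Matrix.trace]
  simp only [srgIdempotent, mul_smul_comm, mul_sub, mul_one, hPJ, trace_smul, trace_sub,
    smul_eq_mul, trace_permMatrix_mul_adjMatrix, trace_permutation, htrJ]
  field_simp

theorem SimpleGraph.IsSRGWith.exists_card_adj_apply_self_eq [Nonempty V] {v k l m : ℕ}
    (h : Γ.IsSRGWith v k l m) {ν₂ ν₃ : ℤ} (hsum : ν₂ + ν₃ = l - m) (hprod : ν₂ * ν₃ = m - k)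
    (hν : ν₂ ≠ ν₃) {σ : Equiv.Perm V} (hσ : ∀ a b, Γ.Adj (σ a) (σ b) ↔ Γ.Adj a b) :
    ∃ t : ℤ, (#{a | Γ.Adj (σ a) a} : ℤ) - ν₃ * (Function.fixedPoints σ).ncard =
      k - ν₃ + t * (ν₂ - ν₃) := by
  obtain rfl := h.card
  have hν' : (ν₂ : ℚ) ≠ ν₃ := by exact_mod_cast hν
  have htrace := trace_permMatrix_mul_srgIdempotent (Γ := Γ) σ (k := (k : ℚ)) hν'
  set P := σ.permMatrix ℚ
  set E := srgIdempotent (Γ.adjMatrix ℚ) (of 1) (k : ℚ) (Fintype.card V) ν₂ ν₃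
  have hE : IsIdempotentElem E :=
    h.isIdempotentElem_srgIdempotent (by exact_mod_cast hsum) (by exact_mod_cast hprod) hν'
  have hPE : Commute P E :=
    (commute_permMatrix_adjMatrix hσ).srgIdempotent_right (commute_permMatrix_of_one σ)
  obtain ⟨t, ht⟩ := exists_trace_eq_intCast_of_pow_eq_self (M := P * E) (s := orderOf σ + 1)
    (by have := orderOf_pos σ; omega)
    (by rw [hPE.mul_pow, hE.pow_succ_eq, pow_succ, ← permMatrix_pow, pow_orderOf_eq_one,
      permMatrix_one, one_mul])
  rw [ht] at htrace
  refine ⟨t, ?_⟩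
  exact_mod_cast (by linear_combination -htrace : ((#{a | Γ.Adj (σ a) a} : ℤ) : ℚ) -
    ν₃ * (Function.fixedPoints σ).ncard = k - ν₃ + t * (ν₂ - ν₃))

end Automorphism

lemma MulAction.ncard_setOf_smul_mem {G α : Type*} [Group G] [MulAction G α] [Finite G]
    (a : α) (S : Set α) :
    {g : G | g • a ∈ S}.ncard = (orbit G a ∩ S).ncard * Nat.card (stabilizer G a) := by
  classical
  have : Fintype G := Fintype.ofFinite G
  set s : Finset G := {g | g • a ∈ S}
  have himage : (s.image (· • a) : Set α) = orbit G a ∩ S := by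
    ext b
    simp only [s, coe_image, coe_filter, mem_univ, true_and, Set.mem_image, Set.mem_ofPred_eq,
      Set.mem_inter_iff, mem_orbit_iff]
    constructor
    · rintro ⟨g, hg, rfl⟩; exact ⟨⟨g, rfl⟩, hg⟩
    · rintro ⟨⟨g, rfl⟩, hg⟩; exact ⟨g, hg, rfl⟩
  have hfiber : ∀ b ∈ s.image (· • a), #{g ∈ s | g • a = b} = Nat.card (stabilizer G a) := by
    simp only [mem_image]
    rintro _ ⟨g₀, hg₀, rfl⟩
    rw [← Nat.card_eq_finsetCard]
    refine Nat.card_congr ((Equiv.mulLeft g₀⁻¹).subtypeEquiv fun g => ?_)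
    simp_all [s, mul_smul, inv_smul_eq_iff]
  rw [show {g : G | g • a ∈ S} = s by simp [s], Set.ncard_coe_finset, ← himage,
    Set.ncard_coe_finset, card_eq_sum_card_image (· • a) s, sum_congr rfl hfiber, sum_const,
    smul_eq_mul]

lemma ncard_setOf_conj_mem {G : Type*} [Group G] [Finite G] (x : G) (S : Set G) :
    {g : G | g * x * g⁻¹ ∈ S}.ncard =
      ({y | ∃ g : G, g * x * g⁻¹ = y} ∩ S).ncard * Nat.card (Subgroup.centralizer {x}) := by
  have horbit : orbit (ConjAct G) x = {y | ∃ g : G, g * x * g⁻¹ = y} := by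
    ext y
    exact ConjAct.toConjAct.surjective.exists.trans (by simp [ConjAct.toConjAct_smul])
  have hstab : Nat.card (Subgroup.centralizer {x}) = Nat.card (stabilizer (ConjAct G) x) := by
    refine Nat.card_congr (ConjAct.toConjAct.toEquiv.subtypeEquiv fun g => ?_)
    simp [Subgroup.mem_centralizer_singleton_iff, ConjAct.toConjAct_smul, mul_inv_eq_iff_eq_mul]
  have : Finite (ConjAct G) := .of_equiv G ConjAct.toConjAct.toEquiv
  rw [← horbit, hstab, ← MulAction.ncard_setOf_smul_mem, ← Nat.card_coe_set_eq,
    ← Nat.card_coe_set_eq]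
  exact Nat.card_congr (ConjAct.toConjAct.toEquiv.subtypeEquiv fun g => by
    simp [ConjAct.toConjAct_smul])

section RegularAction

variable {G V : Type*} [Group G] [MulAction G V]

lemma bijective_smul_of_transitive_of_free (htrans : ∀ a b : V, ∃ g : G, g • a = b)
    (hfree : ∀ (g : G) (a : V), g • a = a → g = 1) (α : V) :
    Function.Bijective (· • α : G → V) := by
  refine ⟨fun g h hgh => ?_, fun b => htrans α b⟩
  have hgh : g • α = h • α := hgh
  have : (h⁻¹ * g) • α = α := by rw [mul_smul, hgh, inv_smul_smul]
  exact (inv_mul_eq_one.mp (hfree _ _ this)).symm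

lemma ncard_setOf_adj_conj_smul [Finite G] [Fintype V] {Γ : SimpleGraph V}
    [DecidableRel Γ.Adj]
    (hpres : ∀ (g : G) (a b : V), Γ.Adj a b ↔ Γ.Adj (g • a) (g • b))
    (htrans : ∀ a b : V, ∃ g : G, g • a = b) (hfree : ∀ (g : G) (a : V), g • a = a → g = 1)
    (α : V) (x : G) :
    {g : G | Γ.Adj ((g * x * g⁻¹) • α) α}.ncard = #{a | Γ.Adj (x • a) a} := by
  let e : G ≃ V := Equiv.ofBijective _
    ((bijective_smul_of_transitive_of_free htrans hfree α).comp inv_involutive.bijective)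
  rw [← Nat.card_coe_set_eq, ← Fintype.card_subtype, ← Nat.card_eq_fintype_card]
  refine Nat.card_congr (e.subtypeEquiv fun g => ?_)
  rw [Set.mem_ofPred_eq, hpres g⁻¹, smul_smul]
  simp [e, mul_smul, mul_assoc]

lemma ncard_conj_inter_compl_mul_card_centralizer_add_card_adj [Finite G] [Fintype V]
    {Γ : SimpleGraph V} [DecidableRel Γ.Adj]
    (hpres : ∀ (g : G) (a b : V), Γ.Adj a b ↔ Γ.Adj (g • a) (g • b))
    (htrans : ∀ a b : V, ∃ g : G, g • a = b) (hfree : ∀ (g : G) (a : V), g • a = a → g = 1)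
    (α : V) {x : G} (hx : x ≠ 1) :
    ({y | ∃ g : G, g * x * g⁻¹ = y} ∩ (({g : G | Γ.Adj (g • α) α} ∪ {1}) : Set G)ᶜ).ncard *
        Nat.card (Subgroup.centralizer {x}) + #{a | Γ.Adj (x • a) a} = Fintype.card V := by
  have hcompl : {g : G | g * x * g⁻¹ ∈ (({g : G | Γ.Adj (g • α) α} ∪ {1}) : Set G)ᶜ} =
      {g : G | Γ.Adj ((g * x * g⁻¹) • α) α}ᶜ := by
    ext g; simp [conj_eq_one_iff, hx]
  rw [← ncard_setOf_conj_mem, ← ncard_setOf_adj_conj_smul hpres htrans hfree, hcompl,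
    Set.ncard_compl_add_ncard,
    Nat.card_congr (Equiv.ofBijective _ (bijective_smul_of_transitive_of_free htrans hfree α)),
    Nat.card_eq_fintype_card]

end RegularAction

lemma add_eq_and_mul_eq_of_eq_quadratic_roots {b D r s : ℝ} (hr : r = (b + √D) / 2)
    (hs : s = (b - √D) / 2) (hrs : r ≠ s) : r + s = b ∧ r * s = (b ^ 2 - D) / 4 := by
  have hD : 0 ≤ D := by
    by_contra! hD
    rw [Real.sqrt_eq_zero_of_nonpos hD.le] at hr hs
    exact hrs (by rw [hr, hs]; ring)
  subst hr hs
  constructor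
  · ring
  · linear_combination (-1 / 4 : ℝ) * Real.sq_sqrt hD

/-- Let `Γ` be a `(v,k,λ,μ)`-strongly regular graph with integer eigenvalues
`k, ν₂ > ν₃` and `μ > 0`, and let `G` act regularly on the vertices of `Γ`.  Fix a
vertex `α`, let `Δ = {g : Γ.Adj (g • α) α} ∪ {1}` and `Δᶜ = G \ Δ`.  Then for every
nontrivial `x ∈ G` there is an integer `u` with
`|x^G ∩ Δᶜ|⬝|C_G(x)| = ν₂ν₃(ν₂+1)(ν₃+1)/μ - ν₂(ν₃+1) - u(ν₂-ν₃)`. -/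
theorem regular_action_complement_count {V G : Type*} [Fintype V] [Group G] [Fintype G]
    (Γ : SimpleGraph V) [DecidableRel Γ.Adj] [MulAction G V]
    (v k l m : ℕ) (ν₂ ν₃ : ℤ)
    (h : Γ.IsSRGWith v k l m) (hm : 0 < m)
    (hν₂ : (ν₂ : ℝ) = ((l : ℝ) - m + Real.sqrt (((l : ℝ) - m) ^ 2 + 4 * ((k : ℝ) - m))) / 2)
    (hν₃ : (ν₃ : ℝ) = ((l : ℝ) - m - Real.sqrt (((l : ℝ) - m) ^ 2 + 4 * ((k : ℝ) - m))) / 2)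
    (h23 : ν₂ > ν₃)
    (hpres : ∀ (g : G) (a b : V), Γ.Adj a b ↔ Γ.Adj (g • a) (g • b))
    (htrans : ∀ a b : V, ∃ g : G, g • a = b)
    (hfree : ∀ (g : G) (a : V), g • a = a → g = 1)
    (α : V) (x : G) (hx : x ≠ 1) :
    ∃ u : ℤ,
      ((Set.ncard ({y : G | ∃ g : G, g * x * g⁻¹ = y} ∩
          (({g : G | Γ.Adj (g • α) α} ∪ {1}) : Set G)ᶜ) *
        Nat.card ↥(Subgroup.centralizer ({x} : Set G)) : ℕ) : ℝ)
        = ((ν₂ : ℝ) * ν₃ * (ν₂ + 1) * (ν₃ + 1)) / m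
            - (ν₂ : ℝ) * (ν₃ + 1) - (u : ℝ) * ((ν₂ : ℝ) - ν₃) := by
  classical
  have : Nonempty V := ⟨α⟩
  obtain ⟨hsum, hprod⟩ := add_eq_and_mul_eq_of_eq_quadratic_roots hν₂ hν₃
    (by exact_mod_cast h23.ne')
  replace hsum : ν₂ + ν₃ = l - m := by exact_mod_cast hsum
  replace hprod : ν₂ * ν₃ = m - k := by
    exact_mod_cast (by linear_combination hprod : (ν₂ * ν₃ : ℝ) = m - k)
  have hμ : (m : ℤ) * v = (k - ν₂) * (k - ν₃) := by
    exact_mod_cast h.mul_card_eq (ν₂ := (ν₂ : ℚ)) (ν₃ := ν₃) (by exact_mod_cast hsum)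
      (by exact_mod_cast hprod)
  obtain ⟨t, ht⟩ := h.exists_card_adj_apply_self_eq hsum hprod h23.ne' (σ := toPerm x)
    fun a b => (hpres x a b).symm
  have hfix : Function.fixedPoints (toPerm x : Equiv.Perm V) = ∅ :=
    Set.eq_empty_of_forall_notMem fun a ha => hx (hfree x a ha)
  simp only [hfix, Set.ncard_empty, toPerm_apply, Nat.cast_zero, mul_zero, sub_zero] at ht
  have hcount := ncard_conj_inter_compl_mul_card_centralizer_add_card_adj hpres htrans hfree α hx
  rw [h.card] at hcount
  generalize (Set.ncard _ * Nat.card _ : ℕ) = N at hcount ⊢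
  have key : (m : ℤ) * N =
      ν₂ * ν₃ * (ν₂ + 1) * (ν₃ + 1) - m * ν₂ * (ν₃ + 1) - m * t * (ν₂ - ν₃) := by
    have hcountZ : (N : ℤ) + #{a | Γ.Adj (x • a) a} = v := by exact_mod_cast hcount
    linear_combination (m : ℤ) * hcountZ - (m : ℤ) * ht + hμ + (k - ν₂ * ν₃ - ν₂ - ν₃) * hprod
  refine ⟨t, ?_⟩
  rw [eq_sub_iff_add_eq, eq_sub_iff_add_eq, eq_div_iff (by exact_mod_cast hm.ne')]
  exact_mod_cast (by linear_combination key : _)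
end

section
/- Let Γ be a (v,k,λ,μ)-strongly regular graph with integer eigenvalues k, ν₂ > ν₃, and let G act regularly on the vertices of Γ; fix a vertex α and let Δ = {g ∈ G : α^g ~ α} ∪ {1}. If ν₂ − ν₃ does not divide μ − ν₃(ν₂ + 1), then for every nontrivial x ∈ G, the conjugacy class x^G intersects Δ nontrivially: x^G ∩ Δ ≠ ∅. -/
/-!
Suppose no conjugate of `x` lies in `Δ`. Then `x` permutes the vertices without fixed points and
moves no vertex to a neighbour, so its permutation matrix `P` commutes with the adjacency matrix `A`
and `tr P = tr (P A) = 0`. Since `(A - ν₂)(A - ν₃) = μ J`, the operator `Q = (A - k)(A - ν₃)` maps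
everything into the `ν₂`-eigenspace `U` of `A` and acts on `U` as `(ν₂ - k)(ν₂ - ν₃)`, whence
`μ v = tr (P Q) = (ν₂ - k)(ν₂ - ν₃) tr (P|U)`. As `P` is defined over `ℤ`, `tr (P|U)` is an integer,
and comparing with `(k - ν₂)(k - ν₃) = μ v` gives `ν₂ - ν₃ ∣ k - ν₃ = μ - ν₃(ν₂ + 1)`.
-/

open Matrix nonZeroDivisors

section Localization

variable {R Rₛ M Mₛ : Type*} [CommRing R] [CommRing Rₛ] [Algebra R Rₛ] (S : Submonoid R)
  [IsLocalization S Rₛ] [AddCommGroup M] [Module R M] [AddCommGroup Mₛ] [Module R Mₛ]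
  [Module Rₛ Mₛ] [IsScalarTower R Rₛ Mₛ] (g : M →ₗ[R] Mₛ) [IsLocalizedModule S g]

theorem LinearMap.trace_restrict_localized' (Λ : Submodule R M) [Module.Free R Λ]
    [Module.Finite R Λ] {f : M →ₗ[R] M} {F : Mₛ →ₗ[Rₛ] Mₛ} (hfF : ∀ y, F (g y) = g (f y))
    (hΛ : ∀ y ∈ Λ, f y ∈ Λ) (hF : ∀ y ∈ Λ.localized' Rₛ S g, F y ∈ Λ.localized' Rₛ S g) :
    trace Rₛ _ (F.restrict hF) = algebraMap R Rₛ (trace R Λ (f.restrict hΛ)) := by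
  let b := Module.Free.chooseBasis R Λ
  let bₛ := b.ofIsLocalizedModule Rₛ S (Λ.toLocalized' Rₛ S g)
  have hcomm : ∀ y : Λ, F.restrict hF (Λ.toLocalized' Rₛ S g y) =
      Λ.toLocalized' Rₛ S g (f.restrict hΛ y) := fun y => Subtype.ext (hfF y)
  rw [trace_eq_matrix_trace Rₛ bₛ, trace_eq_matrix_trace R b, Matrix.trace, Matrix.trace,
    map_sum]
  refine Finset.sum_congr rfl fun i _ => ?_
  rw [diag_apply, diag_apply, toMatrix_apply, toMatrix_apply,
    Module.Basis.ofIsLocalizedModule_apply, hcomm, Module.Basis.ofIsLocalizedModule_repr_apply]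

end Localization

theorem LinearMap.exists_trace_restrict_eq_algebraMap {R K M N : Type*} [CommRing R] [IsDomain R]
    [IsPrincipalIdealRing R] [Field K] [Algebra R K] [IsFractionRing R K] [AddCommGroup M]
    [Module R M] [Module.Free R M] [Module.Finite R M] [AddCommGroup N] [Module R N] [Module K N]
    [IsScalarTower R K N] (g : M →ₗ[R] N) [IsLocalizedModule R⁰ g] {f : M →ₗ[R] M}
    {F : N →ₗ[K] N} (hfF : ∀ y, F (g y) = g (f y)) (U : Submodule K N)
    (hU : ∀ y ∈ U, F y ∈ U) : ∃ t : R, trace K U (F.restrict hU) = algebraMap R K t := by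
  -- `U` is the localization of the lattice `g⁻¹ U`, which is free because `R` is a PID.
  obtain ⟨Λ, hΛ, rfl⟩ : ∃ Λ : Submodule R M, (∀ y ∈ Λ, f y ∈ Λ) ∧ Λ.localized' K R⁰ g = U :=
    ⟨_, fun y hy => show g (f y) ∈ U from hfF y ▸ hU _ hy,
      (Submodule.localized'gi K R⁰ g).l_u_eq U⟩
  exact ⟨_, trace_restrict_localized' R⁰ g Λ hfF hΛ hU⟩

theorem LinearMap.exists_trace_restrict_eq_intCast {ι : Type*} [Fintype ι]
    (f : (ι → ℤ) →ₗ[ℤ] (ι → ℤ)) {F : Module.End ℚ (ι → ℚ)}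
    (hfF : ∀ v, F (Int.cast ∘ v) = Int.cast ∘ f v) (U : Submodule ℚ (ι → ℚ))
    (hU : ∀ y ∈ U, F y ∈ U) : ∃ t : ℤ, trace ℚ U (F.restrict hU) = t := by
  have : IsLocalizedModule ℤ⁰ ((Algebra.linearMap ℤ ℚ).compLeft ι) :=
    (isLocalizedModule_iff_isBaseChange ℤ⁰ ℚ _).mpr
      (.finitePow ι ((isLocalizedModule_iff_isBaseChange ℤ⁰ ℚ _).mp inferInstance))
  simpa using exists_trace_restrict_eq_algebraMap ((Algebra.linearMap ℤ ℚ).compLeft ι) hfF U hU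

section SMulOne

variable {R B : Type*} [CommRing R] [Ring B] [Algebra R B]

theorem sub_smul_one_mul_sub_smul_one (a : B) (r s : R) :
    (a - r • 1) * (a - s • 1) = a * a - (r + s) • a + (r * s) • 1 := by
  simp only [sub_mul, mul_sub, smul_mul_assoc, mul_smul_comm, one_mul, mul_one]
  module

theorem commute_sub_smul_one (a : B) (r s : R) : Commute (a - r • 1) (a - s • 1) :=
  ((Commute.refl a).sub_right ((Commute.one_right a).smul_right s)).sub_left
    ((Commute.one_left _).smul_left r)

end SMulOne

namespace Module.End

theorem mapsTo_eigenspace_of_comm {R M : Type*} [CommRing R] [AddCommGroup M] [Module R M]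
    {f g : End R M} (h : Commute f g) (μ : R) :
    ∀ y ∈ f.eigenspace μ, g y ∈ f.eigenspace μ :=
  fun _ hy => mapsTo_genEigenspace_of_comm h μ 1 hy

theorem mul_trace_mul_eq_trace_restrict_eigenspace {K W : Type*} [Field K] [AddCommGroup W]
    [Module K W] [FiniteDimensional K W] {A P J : End K W} {k m ν₂ ν₃ : K}
    (hquad : (A - ν₂ • 1) * (A - ν₃ • 1) = m • J) (hAJ : A * J = k • J) (hPA : Commute P A)
    (htrP : LinearMap.trace K W P = 0) (htrPA : LinearMap.trace K W (P * A) = 0) :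
    m * LinearMap.trace K W (P * J) = (ν₂ - k) * (ν₂ - ν₃) *
      LinearMap.trace K _ (P.restrict (mapsTo_eigenspace_of_comm hPA.symm ν₂)) := by
  set Q := (A - k • 1) * (A - ν₃ • 1) with hQdef
  have hQ : Q = m • J + (ν₂ - k) • A + ((k - ν₂) * ν₃) • 1 := by
    have hA2 : A * A = m • J + (ν₂ + ν₃) • A - (ν₂ * ν₃) • 1 := by
      rw [← hquad, sub_smul_one_mul_sub_smul_one]; abel
    rw [hQdef, sub_smul_one_mul_sub_smul_one, hA2]
    module
  have hPQ_mem : ∀ y, (P * Q) y ∈ A.eigenspace ν₂ := by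
    have hPν₂ : Commute P (A - ν₂ • 1) := hPA.sub_right ((Commute.one_right P).smul_right ν₂)
    have hkill : (A - ν₂ • 1) * (P * Q) = 0 := by
      rw [← mul_assoc, ← hPν₂.eq, mul_assoc, ← mul_assoc _ (A - k • 1),
        (commute_sub_smul_one A ν₂ k).eq, mul_assoc, hquad, mul_smul_comm, sub_mul, hAJ,
        smul_mul_assoc, one_mul, sub_self, smul_zero, mul_zero]
    intro y
    rw [mem_eigenspace_iff, ← sub_eq_zero]
    simpa using congrArg (fun T : End K W => T y) hkill
  have hQ_eigen : ∀ y ∈ A.eigenspace ν₂, Q y = ((ν₂ - k) * (ν₂ - ν₃)) • y := by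
    intro y hy
    rw [mem_eigenspace_iff] at hy
    simp only [Q, mul_apply, LinearMap.sub_apply, LinearMap.smul_apply, one_apply, hy, map_sub,
      map_smul]
    module
  have hres : (P * Q).restrict (fun y _ => hPQ_mem y) =
      ((ν₂ - k) * (ν₂ - ν₃)) • P.restrict (mapsTo_eigenspace_of_comm hPA.symm ν₂) := by
    ext y
    simp [hQ_eigen y y.2]
  calc m * LinearMap.trace K W (P * J) = LinearMap.trace K W (P * Q) := by
        rw [hQ]; simp [mul_add, htrP, htrPA]
    _ = _ := by
        rw [← LinearMap.trace_restrict_eq_of_forall_mem _ _ hPQ_mem, hres, map_smul, smul_eq_mul]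

end Module.End

theorem Matrix.trace_permMatrix_mul {n R : Type*} [Fintype n] [DecidableEq n] [NonAssocSemiring R]
    (σ : Equiv.Perm n) (M : Matrix n n R) : (σ.permMatrix R * M).trace = ∑ i, M (σ i) i := by
  simp [Matrix.trace, PEquiv.toMatrix_toPEquiv_mul]

namespace SimpleGraph

variable {V R : Type*} [Fintype V] {Γ : SimpleGraph V} [DecidableRel Γ.Adj]

theorem commute_permMatrix_adjMatrix_s8 [DecidableEq V] [NonAssocSemiring R] (σ : Equiv.Perm V)
    (hσ : ∀ a b, Γ.Adj (σ a) (σ b) ↔ Γ.Adj a b) :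
    Commute (σ.permMatrix R) (Γ.adjMatrix R) := by
  ext i j
  rw [PEquiv.toMatrix_toPEquiv_mul, PEquiv.mul_toMatrix_toPEquiv]
  simp only [submatrix_apply, id, adjMatrix_apply]
  congr 1
  conv_lhs => rw [← σ.apply_symm_apply j]
  exact propext (hσ _ _)

omit [Fintype V] in
theorem compl_adjMatrix_eq_of_one_sub_one_sub [DecidableEq V] [Ring R] :
    Γᶜ.adjMatrix R = of 1 - 1 - Γ.adjMatrix R := by
  ext i j
  by_cases hij : i = j
  · subst hij; simp
  · by_cases hadj : Γ.Adj i j <;> simp [hij, hadj, one_apply]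

namespace IsSRGWith

variable [CommRing R] {n k l m : ℕ}

theorem adjMatrix_mul_of_one (h : Γ.IsSRGWith n k l m) :
    Γ.adjMatrix R * of 1 = (k : R) • of 1 := by
  ext i j
  simp [adjMatrix_mul_apply, h.regular.degree_eq]

theorem adjMatrix_sub_mul_sub [DecidableEq V] (h : Γ.IsSRGWith n k l m) {ν₂ ν₃ : R}
    (hsum : ν₂ + ν₃ = l - m) (hprod : ν₂ * ν₃ = m - k) :
    (Γ.adjMatrix R - ν₂ • 1) * (Γ.adjMatrix R - ν₃ • 1) = (m : R) • of 1 := by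
  have hA2 := h.matrix_eq (α := R)
  rw [compl_adjMatrix_eq_of_one_sub_one_sub, sq] at hA2
  rw [sub_smul_one_mul_sub_smul_one, hA2, hsum, hprod]
  simp only [← Nat.cast_smul_eq_nsmul R]
  module

theorem sub_mul_sub_eq [DecidableEq V] [Nonempty V] (h : Γ.IsSRGWith n k l m) {ν₂ ν₃ : R}
    (hsum : ν₂ + ν₃ = l - m) (hprod : ν₂ * ν₃ = m - k) :
    (k - ν₂) * (k - ν₃) = m * n := by
  have hJ := congrArg (· * of 1) (h.adjMatrix_sub_mul_sub hsum hprod)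
  simp only [mul_assoc, sub_mul, mul_sub, mul_smul_comm, h.adjMatrix_mul_of_one, smul_mul_assoc,
    one_mul] at hJ
  obtain ⟨i⟩ := ‹Nonempty V›
  have hii := congrFun (congrFun hJ i) i
  simp only [smul_of, of_sub_of, Matrix.sub_apply, of_apply, Pi.sub_apply, Pi.smul_apply,
    Pi.one_apply, smul_eq_mul, mul_one, Matrix.smul_apply, mul_apply, Finset.sum_const,
    Finset.card_univ, h.card, nsmul_eq_mul] at hii
  linear_combination hii

/-- The integer `t` is the trace of `σ` on the `ν₂`-eigenspace of the adjacency matrix. -/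
theorem exists_mul_card_eq_of_perm [DecidableEq V] (h : Γ.IsSRGWith n k l m) {ν₂ ν₃ : ℤ}
    (hsum : ν₂ + ν₃ = l - m) (hprod : ν₂ * ν₃ = m - k) (σ : Equiv.Perm V)
    (hσ : ∀ a b, Γ.Adj (σ a) (σ b) ↔ Γ.Adj a b) (hfix : ∀ a, σ a ≠ a)
    (hnonadj : ∀ a, ¬ Γ.Adj (σ a) a) :
    ∃ t : ℤ, (m : ℤ) * n = (ν₂ - k) * (ν₂ - ν₃) * t := by
  let A := toLinAlgEquiv' (Γ.adjMatrix ℚ)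
  let P := toLinAlgEquiv' (σ.permMatrix ℚ)
  have htrace : ∀ M : Matrix V V ℚ, LinearMap.trace ℚ _ (toLinAlgEquiv' M) = M.trace :=
    Matrix.trace_toLin'_eq
  have hPA : Commute P A := (commute_permMatrix_adjMatrix_s8 σ hσ).map toLinAlgEquiv'
  have hquad : (Γ.adjMatrix ℚ - (ν₂ : ℚ) • 1) * (Γ.adjMatrix ℚ - (ν₃ : ℚ) • 1) = (m : ℚ) • of 1 :=
    h.adjMatrix_sub_mul_sub (by exact_mod_cast hsum) (by exact_mod_cast hprod)
  have htrP : LinearMap.trace ℚ _ P = 0 := by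
    rw [htrace, ← Matrix.mul_one (σ.permMatrix ℚ), trace_permMatrix_mul]
    exact Finset.sum_eq_zero fun a _ => one_apply_ne (hfix a)
  have htrPA : LinearMap.trace ℚ _ (P * A) = 0 := by
    rw [← map_mul, htrace, trace_permMatrix_mul]
    exact Finset.sum_eq_zero fun a _ => by simp [hnonadj]
  have htrPJ : LinearMap.trace ℚ _ (P * toLinAlgEquiv' (of 1)) = n := by
    rw [← map_mul, htrace, trace_permMatrix_mul]
    simp [h.card]
  have hPint : ∀ v : V → ℤ, P (Int.cast ∘ v) = Int.cast ∘ LinearMap.funLeft ℤ ℤ σ v := fun v =>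
    PEquiv.toMatrix_toPEquiv_mulVec σ _
  have key := Module.End.mul_trace_mul_eq_trace_restrict_eigenspace (k := (k : ℚ))
    (by simpa only [map_mul, map_sub, map_smul, map_one] using congrArg toLinAlgEquiv' hquad)
    (by simpa only [map_mul, map_smul] using
      congrArg toLinAlgEquiv' (h.adjMatrix_mul_of_one (R := ℚ)))
    hPA htrP htrPA
  obtain ⟨t, ht⟩ := LinearMap.exists_trace_restrict_eq_intCast (LinearMap.funLeft ℤ ℤ σ) hPint _
    (Module.End.mapsTo_eigenspace_of_comm hPA.symm ν₂)
  rw [htrPJ, ht] at key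
  exact ⟨t, by exact_mod_cast key⟩

end IsSRGWith

end SimpleGraph

theorem Real.add_eq_and_mul_eq_of_quadratic_roots {b c ν₂ ν₃ : ℝ}
    (h₂ : ν₂ = (b + √(b ^ 2 + 4 * c)) / 2) (h₃ : ν₃ = (b - √(b ^ 2 + 4 * c)) / 2)
    (hne : ν₂ ≠ ν₃) : ν₂ + ν₃ = b ∧ ν₂ * ν₃ = -c := by
  have hdisc : 0 ≤ b ^ 2 + 4 * c := by
    by_contra hneg
    rw [Real.sqrt_eq_zero'.mpr (not_le.mp hneg).le] at h₂ h₃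
    exact hne (by rw [h₂, h₃]; ring)
  refine ⟨by rw [h₂, h₃]; ring, ?_⟩
  rw [h₂, h₃]
  linear_combination (-1 / 4 : ℝ) * Real.sq_sqrt hdisc

theorem Int.dvd_sub_of_sub_mul_sub_eq {k ν₂ ν₃ t : ℤ}
    (h : (k - ν₂) * (k - ν₃) = (ν₂ - k) * (ν₂ - ν₃) * t) : ν₂ - ν₃ ∣ k - ν₃ := by
  rcases eq_or_ne k ν₂ with rfl | hk
  · rfl
  · refine ⟨-t, mul_left_cancel₀ (sub_ne_zero.mpr hk) ?_⟩
    linear_combination h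

theorem not_adj_smul_self_of_forall_not_adj_conj {V G : Type*} [Group G] [MulAction G V]
    {Γ : SimpleGraph V} (hpres : ∀ (g : G) (a b : V), Γ.Adj a b ↔ Γ.Adj (g • a) (g • b))
    (htrans : ∀ a b : V, ∃ g : G, g • a = b) {α : V} {x : G}
    (hconj : ∀ g : G, ¬ Γ.Adj ((g * x * g⁻¹) • α) α) (a : V) : ¬ Γ.Adj (x • a) a := by
  obtain ⟨g, rfl⟩ := htrans α a
  rw [hpres g⁻¹, inv_smul_smul, smul_smul, smul_smul]
  simpa [mul_assoc] using hconj g⁻¹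

theorem regular_action_class_meets_delta_general {V G : Type*} [Fintype V] [Group G]
    (Γ : SimpleGraph V) [DecidableRel Γ.Adj] [MulAction G V]
    (v k l m : ℕ) (ν₂ ν₃ : ℤ)
    (h : Γ.IsSRGWith v k l m)
    (hν₂ : (ν₂ : ℝ) = ((l : ℝ) - m + Real.sqrt (((l : ℝ) - m) ^ 2 + 4 * ((k : ℝ) - m))) / 2)
    (hν₃ : (ν₃ : ℝ) = ((l : ℝ) - m - Real.sqrt (((l : ℝ) - m) ^ 2 + 4 * ((k : ℝ) - m))) / 2)
    (h23 : ν₂ > ν₃)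
    (hdvd : ¬ (ν₂ - ν₃ ∣ (m : ℤ) - ν₃ * (ν₂ + 1)))
    (hpres : ∀ (g : G) (a b : V), Γ.Adj a b ↔ Γ.Adj (g • a) (g • b))
    (htrans : ∀ a b : V, ∃ g : G, g • a = b)
    (hfree : ∀ (g : G) (a : V), g • a = a → g = 1)
    (α : V) (x : G) (hx : x ≠ 1) :
    ({y : G | ∃ g : G, g * x * g⁻¹ = y} ∩
      ({g : G | Γ.Adj (g • α) α} ∪ {1})).Nonempty := by
  classical
  by_contra hempty
  obtain ⟨hsumR, hprodR⟩ := Real.add_eq_and_mul_eq_of_quadratic_roots hν₂ hν₃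
    (by exact_mod_cast h23.ne')
  have hsum : ν₂ + ν₃ = l - m := by exact_mod_cast hsumR
  have hprod : ν₂ * ν₃ = m - k := by rw [neg_sub] at hprodR; exact_mod_cast hprodR
  have : Nonempty V := ⟨α⟩
  obtain ⟨t, ht⟩ := h.exists_mul_card_eq_of_perm hsum hprod (MulAction.toPerm x)
    (fun a b => (hpres x a b).symm) (fun a hxa => hx (hfree x a hxa))
    (not_adj_smul_self_of_forall_not_adj_conj hpres htrans
      fun g hg => hempty ⟨_, ⟨g, rfl⟩, Or.inl hg⟩)
  apply hdvd
  rw [show (m : ℤ) - ν₃ * (ν₂ + 1) = k - ν₃ by linear_combination -hprod]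
  exact Int.dvd_sub_of_sub_mul_sub_eq (by rw [h.sub_mul_sub_eq hsum hprod, ht])

/-- Let `Γ` be a `(v,k,λ,μ)`-strongly regular graph with integer eigenvalues
`k, ν₂ > ν₃`, and let `G` act regularly on the vertices of `Γ`; fix a vertex `α` and
let `Δ = {g : Γ.Adj (g • α) α} ∪ {1}`.  If `ν₂ - ν₃` does not divide `μ - ν₃(ν₂ + 1)`,
then for every nontrivial `x ∈ G` we have `x^G ∩ Δ ≠ ∅`. -/
theorem regular_action_class_meets_delta {V G : Type*} [Fintype V] [Group G] [Fintype G]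
    (Γ : SimpleGraph V) [DecidableRel Γ.Adj] [MulAction G V]
    (v k l m : ℕ) (ν₂ ν₃ : ℤ)
    (h : Γ.IsSRGWith v k l m)
    (hν₂ : (ν₂ : ℝ) = ((l : ℝ) - m + Real.sqrt (((l : ℝ) - m) ^ 2 + 4 * ((k : ℝ) - m))) / 2)
    (hν₃ : (ν₃ : ℝ) = ((l : ℝ) - m - Real.sqrt (((l : ℝ) - m) ^ 2 + 4 * ((k : ℝ) - m))) / 2)
    (h23 : ν₂ > ν₃)
    (hdvd : ¬ (ν₂ - ν₃ ∣ (m : ℤ) - ν₃ * (ν₂ + 1)))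
    (hpres : ∀ (g : G) (a b : V), Γ.Adj a b ↔ Γ.Adj (g • a) (g • b))
    (htrans : ∀ a b : V, ∃ g : G, g • a = b)
    (hfree : ∀ (g : G) (a : V), g • a = a → g = 1)
    (α : V) (x : G) (hx : x ≠ 1) :
    ({y : G | ∃ g : G, g * x * g⁻¹ = y} ∩
      ({g : G | Γ.Adj (g • α) α} ∪ {1})).Nonempty :=
  regular_action_class_meets_delta_general Γ v k l m ν₂ ν₃ h hν₂ hν₃ h23 hdvd hpres htrans hfree α x
    hx
end

section
/- Let G act regularly on the point set of a partial geometry of order (s,t,α), fix a point O, and let Δ = {g ∈ G : O^g ~ O} ∪ {1}. If s + t − α + 1 does not divide (s+1)(t+1), then x^G ∩ Δ ≠ ∅ for every nontrivial x ∈ G. -/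
/-- A partial geometry `pg(s,t,α)`. -/
structure IsPartialGeometry {P L : Type*} (incid : P → L → Prop) (s t a : ℕ) : Prop where
  point_lines : ∀ p : P, Nat.card {l : L | incid p l} = t + 1
  line_points : ∀ l : L, Nat.card {p : P | incid p l} = s + 1
  unique_line : ∀ p q : P, p ≠ q → Set.Subsingleton {l : L | incid p l ∧ incid q l}
  unique_point : ∀ l l' : L, l ≠ l' → Set.Subsingleton {p : P | incid p l ∧ incid p l'}
  alpha_count : ∀ (p : P) (l : L), ¬ incid p l →
    Nat.card {q : P | incid q l ∧ q ≠ p ∧ ∃ l', incid p l' ∧ incid q l'} = a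

/-- Two points are collinear if they are distinct and lie on a common line. -/
def CollinearPts {P L : Type*} (incid : P → L → Prop) (p q : P) : Prop :=
  p ≠ q ∧ ∃ l, incid p l ∧ incid q l

/-!
The collinearity graph of a `pg(s,t,α)` is strongly regular with eigenvalues `k = s(t+1)`,
`r = s - α` and `-t-1`. If the class of `x` avoids `Δ`, then `x` moves every point to a point not
collinear with it, so its permutation matrix `B` satisfies `tr B = tr (B A) = 0`, `A` being the
adjacency matrix. The projection `E` onto the `r`-eigenspace is a combination of `A`, `1` and the
all-ones matrix `J`, so it commutes with `B`; hence `(B E)^(m+1) = B E` for `m` the order of `x`,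
and `tr (B E)` is an algebraic integer. Expanding `E` gives the rational value
`tr (B E) = -(k + t + 1) / (r + t + 1) = -(s+1)(t+1) / (s+t-α+1)`, which must be an integer.
-/

section Obstruction

open Polynomial Matrix

theorem IsOfFinOrder.isIntegral_mul_of_isIdempotentElem {R : Type*} [Ring R] {b e : R}
    (hb : IsOfFinOrder b) (he : IsIdempotentElem e) (hbe : Commute b e) :
    IsIntegral ℤ (b * e) := by
  have hm : 1 < orderOf b + 1 := Nat.succ_lt_succ hb.orderOf_pos
  refine ⟨X ^ (orderOf b + 1) - X, monic_X_pow_sub (by rw [degree_X]; exact_mod_cast hm), ?_⟩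
  rw [← aeval_def, map_sub, map_pow, aeval_X, hbe.mul_pow, he.pow_succ_eq, pow_succ,
    pow_orderOf_eq_one, one_mul, sub_self]

theorem Int.dvd_of_isIntegral_div {a b : ℤ} (hb : b ≠ 0) (h : IsIntegral ℤ ((a : ℂ) / b)) :
    b ∣ a := by
  have hq : IsIntegral ℤ ((a : ℚ) / b) := by
    rw [← isIntegral_algebraMap_iff (algebraMap ℚ ℂ).injective]
    simpa using h
  obtain ⟨y, hy⟩ := IsIntegrallyClosed.isIntegral_iff.mp hq
  refine ⟨y, ?_⟩
  rw [eq_div_iff (by exact_mod_cast hb)] at hy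
  exact_mod_cast (mul_comm (b : ℚ) y ▸ hy).symm

namespace Matrix

variable {n : Type*} [Fintype n] [DecidableEq n]

theorem isIntegral_trace {C : Matrix n n ℂ} (hC : IsIntegral ℤ C) : IsIntegral ℤ C.trace := by
  obtain ⟨p, hp, hpC⟩ := hC
  rw [trace_eq_sum_roots_charpoly]
  refine (integralClosure ℤ ℂ).multiset_sum_mem fun z hz => ⟨p, hp, ?_⟩
  have hz : z ∈ spectrum ℂ C := mem_spectrum_of_isRoot_charpoly (isRoot_of_mem_roots hz)
  have : Nontrivial (Matrix n n ℂ) := by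
    rcases subsingleton_or_nontrivial (Matrix n n ℂ) with _ | _
    · simp [spectrum.of_subsingleton] at hz
    · assumption
  have h := spectrum.subset_polynomial_aeval C (p.map (algebraMap ℤ ℂ)) ⟨z, hz, rfl⟩
  rw [aeval_map_algebraMap, aeval_def, hpC, spectrum.zero_eq] at h
  simpa [eval_map] using h

/-- The projection onto the `r`-eigenspace of `A`. -/
theorem isIdempotentElem_eigenprojection [Nonempty n] {A : Matrix n n ℂ} {k r s μ : ℂ}
    (hrs : r ≠ s) (hA : (A - r • 1) * (A - s • 1) = μ • of 1) (hAJ : A * of 1 = k • of 1)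
    (hJA : of 1 * A = k • of 1) :
    IsIdempotentElem ((r - s)⁻¹ • (A - s • 1 - ((k - s) / Fintype.card n) • of 1)) := by
  set N : ℂ := (Fintype.card n : ℂ)
  have hN : N ≠ 0 := Nat.cast_ne_zero.mpr Fintype.card_ne_zero
  have hJJ : (of 1 : Matrix n n ℂ) * of 1 = N • of 1 := by
    ext i j; simp [mul_apply, N]
  have hμ : μ * N = (k - r) * (k - s) := by
    have h := congrArg (fun M => of 1 * M) hA
    simp only [Matrix.mul_sub, Matrix.sub_mul, Matrix.mul_smul, Matrix.smul_mul,
      ← Matrix.mul_assoc, hJA, hJJ, Matrix.mul_one, smul_smul] at h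
    inhabit n
    have := congrFun (congrFun h default) default
    simp only [smul_of, of_sub_of, of_apply, Pi.sub_apply, Pi.smul_apply, Pi.one_apply,
      smul_eq_mul, mul_one] at this
    linear_combination -this
  set c : ℂ := (k - s) / N
  have hc : c * N = k - s := div_mul_cancel₀ _ hN
  clear_value c
  set M := A - s • 1 - c • of 1
  have hM : M * M = (r - s) • M := by
    have hA' : A * A = (r + s) • A - (r * s) • 1 + μ • of 1 := by
      rw [← hA]
      simp only [Matrix.mul_sub, Matrix.sub_mul, Matrix.mul_smul, Matrix.smul_mul,
        Matrix.mul_one, Matrix.one_mul]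
      module
    simp only [M, Matrix.mul_sub, Matrix.sub_mul, Matrix.mul_smul, Matrix.smul_mul, hA', hAJ,
      hJA, hJJ, Matrix.mul_one, Matrix.one_mul, smul_smul]
    have hcoef : μ - c * k - c * k + c * s + c * s + c * c * N = -((r - s) * c) := by
      apply mul_right_cancel₀ hN
      linear_combination hμ + (c * N + k - s - 2 * k + 2 * s + r - s) * hc
    linear_combination (norm := module) hcoef • (of 1 : Matrix n n ℂ)
  rw [IsIdempotentElem, Matrix.smul_mul, Matrix.mul_smul, hM, smul_smul, smul_smul,
    inv_mul_cancel_right₀ (sub_ne_zero.mpr hrs)]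

theorem sub_dvd_sub_of_trace_eq_zero [Nonempty n] {A B : Matrix n n ℂ} {k r s : ℤ} {μ : ℂ}
    (hrs : r ≠ s) (hA : (A - (r : ℂ) • 1) * (A - (s : ℂ) • 1) = μ • of 1)
    (hAJ : A * of 1 = (k : ℂ) • of 1) (hJA : of 1 * A = (k : ℂ) • of 1)
    (hB : IsOfFinOrder B) (hBA : Commute B A) (hBJ : B * of 1 = of 1) (hJB : of 1 * B = of 1)
    (htrB : B.trace = 0) (htrBA : (B * A).trace = 0) :
    r - s ∣ k - s := by
  have hrs' : (r : ℂ) - s ≠ 0 := sub_ne_zero.mpr (by exact_mod_cast hrs)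
  set E := ((r : ℂ) - s)⁻¹ • (A - (s : ℂ) • 1 - (((k : ℂ) - s) / Fintype.card n) • of 1)
  have hE : IsIdempotentElem E :=
    isIdempotentElem_eigenprojection (sub_ne_zero.mp hrs') hA hAJ hJA
  have hBE : Commute B E :=
    ((hBA.sub_right ((Commute.one_right B).smul_right _)).sub_right
      ((show Commute B (of 1) from hBJ.trans hJB.symm).smul_right _)).smul_right _
  have htrJ : (of 1 : Matrix n n ℂ).trace = Fintype.card n := by simp [trace]
  have htr : (B * E).trace = -(((k - s : ℤ) : ℂ) / (r - s : ℤ)) := by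
    simp only [E, Matrix.mul_smul, Matrix.mul_sub, trace_smul, trace_sub, Matrix.mul_one, hBJ,
      htrB, htrBA, htrJ, smul_eq_mul]
    field_simp
    push_cast
    ring
  have hint := isIntegral_trace (hB.isIntegral_mul_of_isIdempotentElem hE hBE)
  rw [htr] at hint
  exact Int.dvd_of_isIntegral_div (sub_ne_zero.mpr hrs) (by simpa using hint.neg)

end Matrix

namespace SimpleGraph

variable {V : Type*} [Fintype V] {Γ : SimpleGraph V} [DecidableRel Γ.Adj] {n k ℓ μ : ℕ}

theorem IsRegularOfDegree.adjMatrix_mul_of_one_s12 {α : Type*} [NonAssocSemiring α]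
    (hΓ : Γ.IsRegularOfDegree k) : Γ.adjMatrix α * of 1 = (k : α) • of 1 := by
  ext v w
  simp [hΓ v]

theorem IsRegularOfDegree.of_one_mul_adjMatrix_s12 {α : Type*} [NonAssocSemiring α]
    (hΓ : Γ.IsRegularOfDegree k) : of 1 * Γ.adjMatrix α = (k : α) • of 1 := by
  ext v w
  simp [hΓ w]

variable [DecidableEq V]

theorem IsSRGWith.adjMatrix_sub_mul_adjMatrix_sub (hΓ : Γ.IsSRGWith n k ℓ μ) {r s : ℤ}
    (hsum : r + s = (ℓ : ℤ) - μ) (hprod : r * s = (μ : ℤ) - k) :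
    (Γ.adjMatrix ℂ - (r : ℂ) • 1) * (Γ.adjMatrix ℂ - (s : ℂ) • 1) = (μ : ℂ) • of 1 := by
  have hsum' : (r : ℂ) + s = (ℓ : ℂ) - μ := by exact_mod_cast hsum
  have hprod' : (r : ℂ) * s = (μ : ℂ) - k := by exact_mod_cast hprod
  have hcompl : Γᶜ.adjMatrix ℂ = of 1 - 1 - Γ.adjMatrix ℂ := by
    rw [← compl_adjMatrix_eq_adjMatrix_compl ℂ Γ,
      ← one_add_adjMatrix_add_compl_adjMatrix_eq_of_one ℂ Γ]
    abel
  have hsq := hΓ.matrix_eq (α := ℂ)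
  rw [hcompl, sq] at hsq
  simp only [Matrix.mul_sub, Matrix.sub_mul, Matrix.mul_smul, Matrix.smul_mul, Matrix.mul_one,
    Matrix.one_mul, hsq]
  linear_combination (norm := module) (-hsum') • Γ.adjMatrix ℂ + hprod' • (1 : Matrix V V ℂ)

/-- `r` and `s` are the eigenvalues of `Γ` other than `k`. -/
theorem IsSRGWith.sub_dvd_sub_of_iso [Nonempty V] (hΓ : Γ.IsSRGWith n k ℓ μ) {r s : ℤ}
    (hrs : r ≠ s) (hsum : r + s = (ℓ : ℤ) - μ) (hprod : r * s = (μ : ℤ) - k) (σ : Γ ≃g Γ)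
    (hfix : ∀ v, σ v ≠ v) (hadj : ∀ v, ¬ Γ.Adj (σ v) v) :
    r - s ∣ (k : ℤ) - s := by
  set B := Equiv.Perm.permMatrix ℂ (σ.toEquiv : Equiv.Perm V)
  have hB : IsOfFinOrder B := by
    simpa using (permMatrixHom (R := ℂ)).isOfFinOrder
      (isOfFinOrder_of_finite (σ.toEquiv⁻¹ : Equiv.Perm V))
  have hBA : Commute B (Γ.adjMatrix ℂ) := by
    change _ * _ = _ * _
    rw [PEquiv.toMatrix_toPEquiv_mul, PEquiv.mul_toMatrix_toPEquiv]
    ext i j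
    simp only [submatrix_apply, id_eq, adjMatrix_apply]
    refine if_congr ?_ rfl rfl
    rw [← σ.map_adj_iff (v := i)]
    exact iff_of_eq (congrArg _ (σ.toEquiv.apply_symm_apply j)).symm
  have hBJ : B * of 1 = of 1 := by rw [PEquiv.toMatrix_toPEquiv_mul]; rfl
  have hJB : of 1 * B = of 1 := by rw [PEquiv.mul_toMatrix_toPEquiv]; rfl
  have htrB : B.trace = 0 := by
    rw [trace_permutation, Nat.cast_eq_zero, Set.ncard_eq_zero, Set.eq_empty_iff_forall_notMem]
    exact hfix
  have htrBA : (B * Γ.adjMatrix ℂ).trace = 0 := by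
    rw [PEquiv.toMatrix_toPEquiv_mul]
    exact Finset.sum_eq_zero fun v _ => if_neg (hadj v)
  exact sub_dvd_sub_of_trace_eq_zero hrs (hΓ.adjMatrix_sub_mul_adjMatrix_sub hsum hprod)
    hΓ.regular.adjMatrix_mul_of_one_s12 hΓ.regular.of_one_mul_adjMatrix_s12 hB hBA hBJ hJB htrB htrBA

end SimpleGraph

end Obstruction

section PartialGeometry

open Finset

variable {P L : Type*} {incid : P → L → Prop} {s t a : ℕ}

theorem CollinearPts.symm {p q : P} (h : CollinearPts incid p q) : CollinearPts incid q p :=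
  ⟨h.1.symm, h.2.imp fun _ hl => ⟨hl.2, hl.1⟩⟩

def collinearityGraph (incid : P → L → Prop) : SimpleGraph P where
  Adj := CollinearPts incid
  symm := ⟨fun _ _ => CollinearPts.symm⟩
  loopless := ⟨fun _ h => h.1 rfl⟩

theorem collinearPts_smul_iff {G : Type*} [Group G] [MulAction G P] [MulAction G L]
    (hpres : ∀ (g : G) (p : P) (l : L), incid p l ↔ incid (g • p) (g • l)) (g : G) {p q : P} :
    CollinearPts incid (g • p) (g • q) ↔ CollinearPts incid p q := by
  refine and_congr (smul_left_cancel_iff g).not ⟨fun ⟨l, hpl, hql⟩ => ⟨g⁻¹ • l, ?_, ?_⟩,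
    fun ⟨l, hpl, hql⟩ => ⟨g • l, (hpres g p l).1 hpl, (hpres g q l).1 hql⟩⟩
  · rwa [hpres g, smul_inv_smul]
  · rwa [hpres g, smul_inv_smul]

open Classical in
theorem card_collinear_and_eq_sum [Fintype P] [Fintype L]
    (hline : ∀ p q : P, p ≠ q → {l : L | incid p l ∧ incid q l}.Subsingleton)
    (q : P) (Φ : P → Prop) :
    Nat.card {r | CollinearPts incid q r ∧ Φ r}
      = ∑ l with incid q l, Nat.card {r | incid r l ∧ r ≠ q ∧ Φ r} := by
  simp only [Nat.card_eq_card_toFinset, Set.toFinset_ofPred]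
  rw [← card_biUnion]
  · congr 1
    ext r
    simp only [mem_filter, mem_univ, true_and, mem_biUnion]
    constructor
    · rintro ⟨⟨hqr, l, hql, hrl⟩, hΦ⟩
      exact ⟨l, hql, hrl, hqr.symm, hΦ⟩
    · rintro ⟨l, hql, hrl, hrq, hΦ⟩
      exact ⟨⟨hrq.symm, l, hql, hrl⟩, hΦ⟩
  · intro l hl l' hl' hll'
    simp only [coe_filter, mem_univ, true_and, Set.mem_ofPred_eq] at hl hl'
    refine disjoint_left.mpr fun r hr hr' => hll' ?_
    simp only [mem_filter, mem_univ, true_and] at hr hr'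
    exact hline r q hr.2.1 ⟨hr.1, hl⟩ ⟨hr'.1, hl'⟩

namespace IsPartialGeometry

open Classical in
theorem card_filter_incid [Fintype L] (h : IsPartialGeometry incid s t a) (p : P) :
    #{l | incid p l} = t + 1 := by
  rw [← h.point_lines p, Nat.card_eq_card_toFinset, Set.toFinset_ofPred]

theorem card_incid_ne [Finite P] (h : IsPartialGeometry incid s t a) {l : L} {p : P}
    (hpl : incid p l) :
    Nat.card {r | incid r l ∧ r ≠ p} = s := by
  have he : {r | incid r l ∧ r ≠ p} = {r | incid r l} \ {p} := rfl
  rw [he, Nat.card_coe_set_eq, Set.ncard_sdiff_singleton_of_mem (s := {r | incid r l}) hpl,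
    ← Nat.card_coe_set_eq, h.line_points, Nat.add_sub_cancel]

theorem card_collinear [Fintype P] [Fintype L] (h : IsPartialGeometry incid s t a) (p : P) :
    Nat.card {r | CollinearPts incid p r} = s * (t + 1) := by
  classical
  have hsum := card_collinear_and_eq_sum h.unique_line p (fun _ => True)
  simp only [and_true] at hsum
  rw [hsum, sum_congr rfl fun l hl => h.card_incid_ne (mem_filter.mp hl).2, sum_const,
    h.card_filter_incid, smul_eq_mul, mul_comm]

theorem card_incid_collinear [Finite P] (h : IsPartialGeometry incid s t a) {l : L} {q : P}
    (hql : ¬ incid q l) : Nat.card {r | incid r l ∧ CollinearPts incid q r} = a := by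
  rw [← h.alpha_count q l hql]
  exact congrArg (fun S : Set P => Nat.card S)
    (Set.ext fun r => and_congr_right' (and_congr_left' ne_comm))

theorem card_collinear_collinear_of_not_collinear [Fintype P] [Fintype L]
    (h : IsPartialGeometry incid s t a) {p q : P} (hpq : p ≠ q)
    (hnc : ¬ CollinearPts incid p q) :
    Nat.card {r | CollinearPts incid p r ∧ CollinearPts incid q r} = a * (t + 1) := by
  classical
  have hterm : ∀ l, incid p l →
      Nat.card {r | incid r l ∧ r ≠ p ∧ CollinearPts incid q r} = a := fun l hpl => by
    have hql : ¬ incid q l := fun hql => hnc ⟨hpq, l, hpl, hql⟩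
    rw [← h.card_incid_collinear hql]
    refine congrArg (fun S : Set P => Nat.card S) (Set.ext fun r => and_congr_right' ?_)
    exact and_iff_right_of_imp fun hqr hrp => hnc (hrp ▸ hqr).symm
  rw [card_collinear_and_eq_sum h.unique_line,
    sum_congr rfl fun l hl => hterm l (mem_filter.mp hl).2, sum_const, h.card_filter_incid,
    smul_eq_mul, mul_comm]

theorem card_collinear_collinear_of_collinear [Fintype P] [Fintype L]
    (h : IsPartialGeometry incid s t a) {p q : P} (hpq : CollinearPts incid p q) :
    Nat.card {r | CollinearPts incid p r ∧ CollinearPts incid q r} = s - 1 + t * (a - 1) := by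
  classical
  obtain ⟨hne, l₀, hpl₀, hql₀⟩ := hpq
  have hterm : ∀ l, incid p l → Nat.card {r | incid r l ∧ r ≠ p ∧ CollinearPts incid q r}
      = if l = l₀ then s - 1 else a - 1 := by
    intro l hpl
    split_ifs with hl
    · subst hl
      have he : {r | incid r l ∧ r ≠ p ∧ CollinearPts incid q r}
          = {r | incid r l ∧ r ≠ p} \ {q} :=
        Set.ext fun r => ⟨fun ⟨hrl, hrp, hqr, _⟩ => ⟨⟨hrl, hrp⟩, hqr.symm⟩,
          fun ⟨⟨hrl, hrp⟩, hrq⟩ => ⟨hrl, hrp, Ne.symm hrq, l, hql₀, hrl⟩⟩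
      rw [he, Nat.card_coe_set_eq,
        Set.ncard_sdiff_singleton_of_mem (s := {r | incid r l ∧ r ≠ p}) ⟨hql₀, hne.symm⟩,
        ← Nat.card_coe_set_eq, h.card_incid_ne hpl]
    · have hql : ¬ incid q l := fun hql =>
        hl (h.unique_line p q hne ⟨hpl, hql⟩ ⟨hpl₀, hql₀⟩)
      have he : {r | incid r l ∧ r ≠ p ∧ CollinearPts incid q r}
          = {r | incid r l ∧ CollinearPts incid q r} \ {p} :=
        Set.ext fun r => ⟨fun ⟨hrl, hrp, hqr⟩ => ⟨⟨hrl, hqr⟩, hrp⟩,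
          fun ⟨⟨hrl, hqr⟩, hrp⟩ => ⟨hrl, hrp, hqr⟩⟩
      rw [he, Nat.card_coe_set_eq,
        Set.ncard_sdiff_singleton_of_mem (s := {r | incid r l ∧ CollinearPts incid q r})
          ⟨hpl, hne.symm, l₀, hql₀, hpl₀⟩,
        ← Nat.card_coe_set_eq, h.card_incid_collinear hql]
  have hl₀ : l₀ ∈ ({l | incid p l} : Finset L) := mem_filter.mpr ⟨mem_univ _, hpl₀⟩
  rw [card_collinear_and_eq_sum h.unique_line,
    sum_congr rfl fun l hl => hterm l (mem_filter.mp hl).2, ← add_sum_erase _ _ hl₀,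
    if_pos rfl, sum_congr rfl fun l hl => if_neg (ne_of_mem_erase hl), sum_const,
    card_erase_of_mem hl₀,
    h.card_filter_incid, smul_eq_mul, Nat.add_sub_cancel]

theorem isSRGWith [Fintype P] [Fintype L] (h : IsPartialGeometry incid s t a)
    [DecidableRel (collinearityGraph incid).Adj] :
    (collinearityGraph incid).IsSRGWith (Fintype.card P) (s * (t + 1)) (s - 1 + t * (a - 1))
      (a * (t + 1)) where
  card := rfl
  regular p := by
    rw [← SimpleGraph.card_neighborSet_eq_degree, ← Nat.card_eq_fintype_card]
    exact h.card_collinear p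
  of_adj _ _ hpq := by
    rw [← Nat.card_eq_fintype_card]
    exact h.card_collinear_collinear_of_collinear hpq
  of_not_adj _ _ hpq hnc := by
    rw [← Nat.card_eq_fintype_card]
    exact h.card_collinear_collinear_of_not_collinear hpq hnc

theorem exists_incid (h : IsPartialGeometry incid s t a) (p : P) : ∃ l, incid p l := by
  have hcard : Nat.card {l | incid p l} ≠ 0 := by
    rw [h.point_lines p]
    exact Nat.succ_ne_zero t
  obtain ⟨⟨l, hl⟩⟩ := (Nat.card_ne_zero.mp hcard).1
  exact ⟨l, hl⟩

theorem alpha_le_succ_of_not_incid [Fintype P] [Fintype L] (h : IsPartialGeometry incid s t a)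
    {q : P} {l : L} (hql : ¬ incid q l) : a ≤ t + 1 := by
  classical
  calc a = Nat.card {r | CollinearPts incid q r ∧ incid r l} := by
        rw [← h.card_incid_collinear hql]
        exact congrArg (fun S : Set P => Nat.card S) (Set.ext fun r => and_comm)
    _ = ∑ l' with incid q l', Nat.card {r | incid r l' ∧ r ≠ q ∧ incid r l} :=
        card_collinear_and_eq_sum h.unique_line q _
    _ ≤ ∑ l' with incid q l', 1 := sum_le_sum fun l' hl' => by
        have hne : l' ≠ l := fun e => hql (e ▸ (mem_filter.mp hl').2)
        have hsub : {r | incid r l' ∧ r ≠ q ∧ incid r l}.Subsingleton :=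
          (h.unique_point l' l hne).anti fun r hr => ⟨hr.1, hr.2.2⟩
        exact Finite.card_le_one_iff_subsingleton.mpr hsub.coe_sort
    _ = t + 1 := by rw [sum_const, smul_eq_mul, mul_one, h.card_filter_incid]

theorem one_le_s_of_not_incid [Fintype P] [Fintype L] (h : IsPartialGeometry incid s t a)
    (ha : 1 ≤ a) {q : P} {l : L} (hql : ¬ incid q l) : 1 ≤ s := by
  have hle : a ≤ s * (t + 1) := by
    rw [← h.card_incid_collinear hql, ← h.card_collinear q]
    exact Nat.card_mono (Set.toFinite _) fun r hr => hr.2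
  refine Nat.pos_of_ne_zero fun hs => ?_
  rw [hs, zero_mul] at hle
  omega

end IsPartialGeometry

end PartialGeometry

theorem partialGeometry_class_meets_delta_general {P L G : Type*} [Fintype P] [Fintype L]
    [Group G] [MulAction G P] [MulAction G L]
    (incid : P → L → Prop) (s t a : ℕ) (ha : 1 ≤ a)
    (h : IsPartialGeometry incid s t a)
    (hpres : ∀ (g : G) (p : P) (l : L), incid p l ↔ incid (g • p) (g • l))
    (htrans : ∀ p q : P, ∃ g : G, g • p = q)
    (hfree : ∀ (g : G) (p : P), g • p = p → g = 1)
    (O : P)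
    (hdvd : ¬ (((s : ℤ) + t - a + 1) ∣ ((s : ℤ) + 1) * ((t : ℤ) + 1)))
    (x : G) (hx : x ≠ 1) :
    ({y : G | ∃ g : G, g * x * g⁻¹ = y} ∩
      ({g : G | CollinearPts incid (g • O) O} ∪ {1})).Nonempty := by
  classical
  by_contra hmiss
  have hfix : ∀ p : P, x • p ≠ p := fun p hp => hx (hfree x p hp)
  have hnc : ∀ p : P, ¬ CollinearPts incid (x • p) p := by
    rintro p hxp
    obtain ⟨g, rfl⟩ := htrans O p
    refine hmiss ⟨g⁻¹ * x * g, ⟨g⁻¹, by rw [inv_inv]⟩, Or.inl ?_⟩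
    show CollinearPts incid ((g⁻¹ * x * g) • O) O
    rw [← collinearPts_smul_iff hpres g]
    simpa [mul_smul] using hxp
  obtain ⟨l, hOl⟩ := h.exists_incid O
  have hxOl : ¬ incid (x • O) l := fun hxOl => hnc O ⟨hfix O, l, hxOl, hOl⟩
  have hat := h.alpha_le_succ_of_not_incid hxOl
  have hs := h.one_le_s_of_not_incid ha hxOl
  have : Nonempty P := ⟨O⟩
  let σ : collinearityGraph incid ≃g collinearityGraph incid :=
    ⟨MulAction.toPerm x, collinearPts_smul_iff hpres x⟩
  have hdiv := h.isSRGWith.sub_dvd_sub_of_iso (r := s - a) (s := -(t + 1)) (by omega)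
    (by push_cast [Nat.cast_sub hs, Nat.cast_sub ha]; ring)
    (by push_cast [Nat.cast_sub hs, Nat.cast_sub ha]; ring) σ hfix hnc
  exact hdvd (by convert hdiv using 1 <;> push_cast <;> ring)

/-- Let `G` act regularly on the point set of a partial geometry of order `(s,t,α)`,
fix a point `O`, and let `Δ = {g : O^g ~ O} ∪ {1}`.  If `s + t - α + 1` does not
divide `(s+1)(t+1)`, then `x^G ∩ Δ ≠ ∅` for every nontrivial `x ∈ G`. -/
theorem partialGeometry_class_meets_delta {P L G : Type*} [Fintype P] [Fintype L]
    [Group G] [Fintype G] [MulAction G P] [MulAction G L]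
    (incid : P → L → Prop) (s t a : ℕ) (ha : 1 ≤ a)
    (h : IsPartialGeometry incid s t a)
    (hpres : ∀ (g : G) (p : P) (l : L), incid p l ↔ incid (g • p) (g • l))
    (htrans : ∀ p q : P, ∃ g : G, g • p = q)
    (hfree : ∀ (g : G) (p : P), g • p = p → g = 1)
    (O : P)
    (hdvd : ¬ (((s : ℤ) + t - a + 1) ∣ ((s : ℤ) + 1) * ((t : ℤ) + 1)))
    (x : G) (hx : x ≠ 1) :
    ({y : G | ∃ g : G, g * x * g⁻¹ = y} ∩
      ({g : G | CollinearPts incid (g • O) O} ∪ {1})).Nonempty :=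
  partialGeometry_class_meets_delta_general incid s t a ha h hpres htrans hfree O hdvd x hx
end

section
/- No group of order 625 contains a regular (625, 246, 119, 82)-partial difference set. -/
/-- `S` is a regular `(v,k,λ,μ)`-partial difference set in the finite group `G`:
`|G| = v`, `|S| = k`, `1 ∉ S`, `S = S⁻¹`, and every nonidentity element `g` has
exactly `λ` representations `g = a * b⁻¹` with `a, b ∈ S` if `g ∈ S`, and exactly
`μ` such representations if `g ∉ S`. -/
def IsRegularPDS {G : Type*} [Group G] [Fintype G] [DecidableEq G]
    (S : Finset G) (v k l m : ℕ) : Prop :=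
  Fintype.card G = v ∧ S.card = k ∧ (1 : G) ∉ S ∧ (∀ s : G, s ∈ S ↔ s⁻¹ ∈ S) ∧
    (∀ g ∈ S, ((S ×ˢ S).filter (fun p => p.1 * p.2⁻¹ = g)).card = l) ∧
    (∀ g : G, g ∉ S → g ≠ 1 → ((S ×ˢ S).filter (fun p => p.1 * p.2⁻¹ = g)).card = m)

/-!
Let `A` be the adjacency matrix of the Cayley graph of `(G, S)` and `J` the all-ones matrix.
The difference-set condition reads `A² = (k - μ) I + (λ - μ) A + μ J`, so on the orthogonal
complement of the all-ones vector `A` has the eigenvalues `r = 41` and `s = -4`, and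
`E = (A - s I - ((k - s) / v) J) / (r - s)` is the projection onto its `r`-eigenspace.
Right multiplication by any `z ≠ 1` gives a permutation matrix `P` of finite order commuting
with `A`, hence with `E`; so `P E` is integral over `ℤ` and its trace, a sum of roots of unity,
is an algebraic integer. This trace is the rational number
`(#{g | g z g⁻¹ ∈ S} - (k - s)) / (r - s)`. A group of order `5⁴` has a central `z ≠ 1`, for
which the trace is `375 / 45` or `-250 / 45`, and neither is an integer.
-/

open Finset Matrix Polynomial

theorem IsIntegral.of_pow_succ_eq_self {R A : Type*} [CommRing R] [Ring A] [Algebra R A]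
    {x : A} {n : ℕ} (hn : n ≠ 0) (h : x ^ (n + 1) = x) : IsIntegral R x :=
  ⟨X ^ (n + 1) - X,
    monic_X_pow_sub (degree_X_le.trans_lt (by exact_mod_cast (by omega : 1 < n + 1))),
    by simp [h]⟩

theorem IsOfFinOrder.isIntegral_mul {R A : Type*} [CommRing R] [Ring A] [Algebra R A]
    {u e : A} (hu : IsOfFinOrder u) (he : IsIdempotentElem e) (hue : Commute u e) :
    IsIntegral R (u * e) := by
  obtain ⟨n, hn, hun⟩ := isOfFinOrder_iff_pow_eq_one.1 hu
  refine IsIntegral.of_pow_succ_eq_self hn.ne' ?_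
  rw [hue.mul_pow, he.pow_succ_eq, pow_succ', hun, mul_one]

theorem Matrix.isIntegral_trace_s17 {n K R : Type*} [Fintype n] [DecidableEq n] [Field K]
    [IsAlgClosed K] [CommRing R] [Algebra R K] {M : Matrix n n K} (hM : IsIntegral R M) :
    IsIntegral R M.trace := by
  rw [trace_eq_sum_roots_charpoly]
  refine IsIntegral.multiset_sum fun r hr => ?_
  have hr_spec : r ∈ spectrum K M :=
    mem_spectrum_iff_isRoot_charpoly.2 (isRoot_of_mem_roots hr)
  have : Nontrivial (Matrix n n K) := by
    by_contra h
    have := not_nontrivial_iff_subsingleton.1 h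
    rwa [spectrum.of_subsingleton] at hr_spec
  obtain ⟨p, hp_monic, hp⟩ := hM
  refine ⟨p, hp_monic, ?_⟩
  have hp_r := spectrum.subset_polynomial_aeval M (p.map (algebraMap R K)) ⟨r, hr_spec, rfl⟩
  rw [aeval_map_algebraMap, aeval_def, hp, spectrum.zero_eq, Set.mem_singleton_iff] at hp_r
  simpa only [eval_map_algebraMap, aeval_def] using hp_r

theorem exists_intCast_eq_of_isIntegral_ratCast {K : Type*} [Field K] [CharZero K] {q : ℚ}
    (h : IsIntegral ℤ (q : K)) : ∃ t : ℤ, (t : ℚ) = q := by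
  rw [← eq_ratCast (algebraMap ℚ K), isIntegral_algebraMap_iff (algebraMap ℚ K).injective] at h
  exact IsIntegrallyClosed.isIntegral_iff.1 h

theorem Equiv.Perm.isOfFinOrder_permMatrix {n R : Type*} [Fintype n] [DecidableEq n]
    [Semiring R] (σ : Equiv.Perm n) : IsOfFinOrder (σ.permMatrix R) := by
  simpa using (permMatrixHom (n := n) (R := R)).isOfFinOrder (isOfFinOrder_of_finite σ⁻¹)

def allOnes (n R : Type*) [One R] : Matrix n n R := of fun _ _ => 1

section AllOnes

variable {n R : Type*} [Fintype n] [Semiring R]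

theorem allOnes_mul_allOnes : allOnes n R * allOnes n R = (Fintype.card n : R) • allOnes n R := by
  ext
  simp [mul_apply, allOnes]

theorem trace_allOnes : trace (allOnes n R) = Fintype.card n := by
  simp [trace, allOnes]

variable [DecidableEq n]

theorem permMatrix_mul_allOnes (σ : Equiv.Perm n) : σ.permMatrix R * allOnes n R = allOnes n R := by
  ext
  simp [allOnes, PEquiv.toMatrix_toPEquiv_mul]

theorem allOnes_mul_permMatrix (σ : Equiv.Perm n) : allOnes n R * σ.permMatrix R = allOnes n R := by
  ext
  simp [allOnes, PEquiv.mul_toMatrix_toPEquiv]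

end AllOnes

section Cayley

variable {G R : Type*} [Group G] [DecidableEq G]

theorem card_filter_mul_inv_eq_one (S : Finset G) :
    #{p ∈ S ×ˢ S | p.1 * p.2⁻¹ = 1} = #S := by
  simp_rw [mul_inv_eq_one, ← diag_eq_filter, diag_card]

variable [Fintype G]

theorem card_filter_mul_inv_mem_and_mem {S : Finset G} (hS : ∀ s, s ∈ S ↔ s⁻¹ ∈ S) (g h : G) :
    #{x | g * x⁻¹ ∈ S ∧ x * h⁻¹ ∈ S} = #{p ∈ S ×ˢ S | p.1 * p.2⁻¹ = g * h⁻¹} := by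
  refine card_nbij' (fun x => (g * x⁻¹, h * x⁻¹)) (fun p => p.1⁻¹ * g) ?_ ?_ ?_ ?_
  · intro x hx
    simp only [coe_filter, mem_univ, true_and, Set.mem_ofPred_eq, mem_product] at hx ⊢
    exact ⟨⟨hx.1, by simpa using (hS _).1 hx.2⟩, by group⟩
  · rintro ⟨a, b⟩ hp
    simp only [coe_filter, mem_product, Set.mem_ofPred_eq, mem_univ, true_and] at hp ⊢
    obtain ⟨⟨ha, hb⟩, hab⟩ := hp
    refine ⟨by simpa using ha, ?_⟩
    rw [mul_assoc, ← hab]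
    simpa using (hS b).1 hb
  · intro x _
    simp
  · rintro ⟨a, b⟩ hp
    simp only [coe_filter, mem_product, Set.mem_ofPred_eq] at hp
    have hb : b = h * g⁻¹ * a := by
      rw [show h * g⁻¹ = (g * h⁻¹)⁻¹ by group, ← hp.2]
      group
    simp [hb, mul_assoc]

variable (R) in
def cayleyMatrix [Zero R] [One R] (S : Finset G) : Matrix G G R :=
  of fun g h => if g * h⁻¹ ∈ S then 1 else 0

theorem IsRegularPDS.cayleyMatrix_mul_self [Ring R] {S : Finset G} {v k l m : ℕ}
    (hS : IsRegularPDS S v k l m) :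
    cayleyMatrix R S * cayleyMatrix R S =
      ((k : R) - m) • 1 + ((l : R) - m) • cayleyMatrix R S + (m : R) • allOnes G R := by
  obtain ⟨-, hk, h1, hinv, hl, hm⟩ := hS
  ext g h
  simp only [mul_apply, cayleyMatrix, allOnes, of_apply, ite_zero_mul_ite_zero, mul_one,
    sum_boole, card_filter_mul_inv_mem_and_mem hinv, Matrix.add_apply, Matrix.smul_apply,
    one_apply, smul_eq_mul]
  by_cases hgh : g = h
  · subst hgh
    simp [card_filter_mul_inv_eq_one, hk, h1]
  by_cases hS : g * h⁻¹ ∈ S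
  · simp [hl _ hS, hS, hgh]
  · have hne : g * h⁻¹ ≠ 1 := mul_inv_eq_one.not.2 hgh
    simp [hm _ hS hne, hS, hgh]

theorem cayleyMatrix_mul_allOnes [Semiring R] (S : Finset G) :
    cayleyMatrix R S * allOnes G R = (#S : R) • allOnes G R := by
  ext g h
  simp only [mul_apply, cayleyMatrix, allOnes, of_apply, mul_one, sum_boole, Matrix.smul_apply,
    smul_eq_mul]
  exact congrArg Nat.cast <| card_equiv ((Equiv.inv G).trans (Equiv.mulLeft g)) (by simp)

theorem allOnes_mul_cayleyMatrix [Semiring R] (S : Finset G) :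
    allOnes G R * cayleyMatrix R S = (#S : R) • allOnes G R := by
  ext g h
  simp only [mul_apply, cayleyMatrix, allOnes, of_apply, one_mul, sum_boole, Matrix.smul_apply,
    smul_eq_mul, mul_one]
  exact congrArg Nat.cast <| card_equiv (Equiv.mulRight h⁻¹) (by simp)

theorem IsRegularPDS.param_eq {S : Finset G} {v k l m : ℕ} (hS : IsRegularPDS S v k l m) :
    (k : ℤ) * (k - l - 1) = m * (v - k - 1) := by
  have h := congrArg (· * allOnes G ℤ) (hS.cayleyMatrix_mul_self (R := ℤ))
  simp only [Matrix.mul_assoc, cayleyMatrix_mul_allOnes, Matrix.mul_smul, add_mul, smul_mul_assoc,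
    Matrix.one_mul, allOnes_mul_allOnes, smul_smul, hS.2.1, hS.1] at h
  have h11 := congrFun₂ h 1 1
  simp only [allOnes, Matrix.smul_apply, Matrix.add_apply, of_apply, smul_eq_mul, mul_one] at h11
  linear_combination h11

theorem commute_permMatrix_mulRight_cayleyMatrix [Semiring R] (S : Finset G) (z : G) :
    Commute ((Equiv.mulRight z).permMatrix R) (cayleyMatrix R S) := by
  ext g h
  simp [PEquiv.toMatrix_toPEquiv_mul, PEquiv.mul_toMatrix_toPEquiv, cayleyMatrix, mul_assoc]

theorem trace_permMatrix_mulRight_mul_cayleyMatrix [Semiring R] (S : Finset G) (z : G) :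
    trace ((Equiv.mulRight z).permMatrix R * cayleyMatrix R S) = #{g | g * z * g⁻¹ ∈ S} := by
  simp [trace, PEquiv.toMatrix_toPEquiv_mul, cayleyMatrix]

theorem trace_permMatrix_mulRight [Semiring R] {z : G} (hz : z ≠ 1) :
    trace ((Equiv.mulRight z).permMatrix R) = 0 := by
  simp [trace, Equiv.toPEquiv_apply, hz]

noncomputable def cayleyProjection (S : Finset G) (r s : ℤ) : Matrix G G ℂ :=
  ((r : ℂ) - s)⁻¹ •
    (cayleyMatrix ℂ S - (s : ℂ) • 1 - (((#S : ℂ) - s) / Fintype.card G) • allOnes G ℂ)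

theorem IsRegularPDS.isIdempotentElem_cayleyProjection {S : Finset G} {v k l m : ℕ}
    (hS : IsRegularPDS S v k l m) {r s : ℤ} (hrs : r ≠ s) (hsum : r + s = l - m)
    (hprod : r * s = m - k) : IsIdempotentElem (cayleyProjection S r s) := by
  have hA := hS.cayleyMatrix_mul_self (R := ℂ)
  have hparam : (k : ℂ) * (k - l - 1) = m * (v - k - 1) := by exact_mod_cast hS.param_eq
  obtain ⟨hv, hk, -⟩ := hS
  have hv0 : (v : ℂ) ≠ 0 := by rw [← hv]; exact_mod_cast Fintype.card_ne_zero
  have hrs' : (r : ℂ) - s ≠ 0 := sub_ne_zero.2 (by exact_mod_cast hrs)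
  have hsum' : (r : ℂ) + s = l - m := by exact_mod_cast hsum
  have hprod' : (r : ℂ) * s = m - k := by exact_mod_cast hprod
  rw [IsIdempotentElem, cayleyProjection]
  simp only [Matrix.mul_smul, Matrix.smul_mul, Matrix.mul_sub, Matrix.sub_mul, Matrix.mul_one,
    Matrix.one_mul, hA, cayleyMatrix_mul_allOnes, allOnes_mul_cayleyMatrix,
    allOnes_mul_allOnes, hk, hv, smul_smul]
  match_scalars <;> field_simp
  · linear_combination hprod'
  · linear_combination -hsum'
  · linear_combination (k : ℂ) * hsum' - hprod' - hparam

theorem commute_permMatrix_mulRight_cayleyProjection (S : Finset G) (r s : ℤ) (z : G) :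
    Commute ((Equiv.mulRight z).permMatrix ℂ) (cayleyProjection S r s) := by
  have hJ : Commute ((Equiv.mulRight z).permMatrix ℂ) (allOnes G ℂ) :=
    (permMatrix_mul_allOnes _).trans (allOnes_mul_permMatrix _).symm
  exact (((commute_permMatrix_mulRight_cayleyMatrix S z).sub_right
    ((Commute.one_right _).smul_right _)).sub_right (hJ.smul_right _)).smul_right _

theorem trace_permMatrix_mulRight_mul_cayleyProjection (S : Finset G) (r s : ℤ) {z : G}
    (hz : z ≠ 1) :
    trace ((Equiv.mulRight z).permMatrix ℂ * cayleyProjection S r s) =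
      ((#{g | g * z * g⁻¹ ∈ S} : ℂ) - (#S - s)) / (r - s) := by
  have hG : (Fintype.card G : ℂ) ≠ 0 := by exact_mod_cast Fintype.card_ne_zero
  simp only [cayleyProjection, Matrix.mul_smul, Matrix.mul_sub, Matrix.mul_one, trace_smul,
    trace_sub, trace_permMatrix_mulRight_mul_cayleyMatrix, trace_permMatrix_mulRight hz,
    permMatrix_mul_allOnes, trace_allOnes, smul_eq_mul, mul_zero, sub_zero]
  rw [div_eq_inv_mul]
  field_simp

theorem IsRegularPDS.sub_dvd_card_conj_mem_sub {S : Finset G} {v k l m : ℕ}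
    (hS : IsRegularPDS S v k l m) {r s : ℤ} (hrs : r ≠ s) (hsum : r + s = l - m)
    (hprod : r * s = m - k) {z : G} (hz : z ≠ 1) :
    r - s ∣ (#{g | g * z * g⁻¹ ∈ S} : ℤ) - (k - s) := by
  have hint : IsIntegral ℤ (trace ((Equiv.mulRight z).permMatrix ℂ * cayleyProjection S r s)) :=
    isIntegral_trace_s17 <| (Equiv.Perm.isOfFinOrder_permMatrix _).isIntegral_mul
      (hS.isIdempotentElem_cayleyProjection hrs hsum hprod)
      (commute_permMatrix_mulRight_cayleyProjection S r s z)
  rw [trace_permMatrix_mulRight_mul_cayleyProjection S r s hz, hS.2.1] at hint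
  obtain ⟨t, ht⟩ := exists_intCast_eq_of_isIntegral_ratCast (K := ℂ)
    (q := ((#{g | g * z * g⁻¹ ∈ S} : ℚ) - (k - s)) / (r - s)) (by push_cast; exact hint)
  have hrs' : (r : ℚ) - s ≠ 0 := sub_ne_zero.2 (by exact_mod_cast hrs)
  rw [eq_div_iff hrs'] at ht
  refine ⟨t, ?_⟩
  have hq : ((#{g | g * z * g⁻¹ ∈ S} : ℤ) - (k - s) : ℚ) = (r - s) * t := by
    linear_combination -ht
  exact_mod_cast hq

end Cayley

/-- No group of order 625 contains a regular `(625, 246, 119, 82)`-partial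
difference set. -/
theorem no_pds_625 {G : Type*} [Group G] [Fintype G] [DecidableEq G]
    (hv : Fintype.card G = 625) :
    ¬ ∃ S : Finset G, IsRegularPDS S 625 246 119 82 := by
  rintro ⟨S, hS⟩
  have : Fact (Nat.Prime 5) := ⟨by norm_num⟩
  have : Nontrivial G := Fintype.one_lt_card_iff_nontrivial.1 (by rw [hv]; norm_num)
  have hG : IsPGroup 5 G :=
    IsPGroup.of_card (n := 4) (by rw [Nat.card_eq_fintype_card, hv]; norm_num)
  obtain ⟨z, hz_center, hz⟩ := (Subgroup.nontrivial_iff_exists_ne_one _).1 hG.center_nontrivial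
  have hdvd : (45 : ℤ) ∣ #{g | g * z * g⁻¹ ∈ S} - 250 := by
    simpa using hS.sub_dvd_card_conj_mem_sub (r := 41) (s := -4) (by norm_num) (by norm_num)
      (by norm_num) hz
  have hconj (g : G) : g * z * g⁻¹ = z := by
    rw [Subgroup.mem_center_iff.1 hz_center g, mul_inv_cancel_right]
  by_cases hzS : z ∈ S <;> simp [hconj, hzS, hv] at hdvd
end
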